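/- arXiv:2502.17001 — 6 statements merged into one kernel-verified Lean document; each statement's English description precedes it below -/
import Mathlib

section
/- The Banach space ℓ₁ (of absolutely summable real sequences) does not admit any boundary that is σ-discrete in the weak* topology of ℓ₁*; that is, no boundary B for ℓ₁ can be written as a countable union of subsets each of which is discrete in its relative weak* topology. -/
open scoped ENNReal

/-- A normed space is *polyhedral* if every finite-dimensional subspace embeds
isometrically into some `ℓ∞ⁿ = (Fin n → ℝ)` with the sup norm. -/
def IsPolyhedral (P : Type*) [NormedAddCommGroup P] [NormedSpace ℝ P] : Prop :=
  ∀ S : Submodule ℝ P, FiniteDimensional ℝ S →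
    ∃ (n : ℕ) (T : S →ₗ[ℝ] (Fin n → ℝ)), ∀ s : S, ‖T s‖ = ‖s‖

/-- A normed space is *isomorphically polyhedral* if it is linearly homeomorphic to a
polyhedral Banach space. -/
def IsomorphicallyPolyhedral (X : Type u) [NormedAddCommGroup X] [NormedSpace ℝ X] : Prop :=
  ∃ (P : Type u) (_ : NormedAddCommGroup P) (_ : NormedSpace ℝ P),
    CompleteSpace P ∧ IsPolyhedral P ∧ Nonempty (X ≃L[ℝ] P)

/-- `Z` is a twisted sum of `Y` and `X`: there is an exact sequence `0 → Y → Z → X → 0`,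
i.e. `j : Y → Z` is an isomorphism onto its (closed) range, `q : Z → X` is onto, and
`range j = ker q`. -/
def IsTwistedSum (Y : Type*) (Z : Type*) (X : Type*)
    [NormedAddCommGroup Y] [NormedSpace ℝ Y] [NormedAddCommGroup Z] [NormedSpace ℝ Z]
    [NormedAddCommGroup X] [NormedSpace ℝ X] : Prop :=
  ∃ (j : Y →L[ℝ] Z) (q : Z →L[ℝ] X),
    (∃ c : ℝ, 0 < c ∧ ∀ y : Y, c * ‖y‖ ≤ ‖j y‖) ∧
    Function.Surjective q ∧
    ∀ z : Z, (∃ y : Y, j y = z) ↔ q z = 0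

/-- `B` is a boundary for `X`: a subset of the dual unit sphere such that every `x` attains
its norm at some member of `B`. -/
def IsBoundary (X : Type*) [NormedAddCommGroup X] [NormedSpace ℝ X]
    (B : Set (X →L[ℝ] ℝ)) : Prop :=
  (∀ f ∈ B, ‖f‖ = 1) ∧ ∀ x : X, ∃ f ∈ B, f x = ‖x‖

/-- The canonical identification of the dual with the weak* dual. -/
noncomputable def toWeakStar {X : Type*} [NormedAddCommGroup X] [NormedSpace ℝ X]
    (f : X →L[ℝ] ℝ) : WeakDual ℝ X := StrongDual.toWeakDual f

/-- `S` is discrete in its relative weak* topology. -/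
def IsWeakStarDiscrete {X : Type*} [NormedAddCommGroup X] [NormedSpace ℝ X]
    (S : Set (X →L[ℝ] ℝ)) : Prop :=
  ∀ f ∈ S, ∃ U : Set (WeakDual ℝ X), IsOpen U ∧ toWeakStar f ∈ U ∧
    ∀ g ∈ S, toWeakStar g ∈ U → g = f

/-- `S` is a countable union of weak*-discrete sets. -/
def IsWeakStarSigmaDiscrete {X : Type*} [NormedAddCommGroup X] [NormedSpace ℝ X]
    (S : Set (X →L[ℝ] ℝ)) : Prop :=
  ∃ T : ℕ → Set (X →L[ℝ] ℝ), S = ⋃ n, T n ∧ ∀ n, IsWeakStarDiscrete (T n)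

/-- `S` is discrete in its relative norm topology. -/
def IsNormDiscrete {X : Type*} [NormedAddCommGroup X] [NormedSpace ℝ X]
    (S : Set (X →L[ℝ] ℝ)) : Prop :=
  ∀ f ∈ S, ∃ ε : ℝ, 0 < ε ∧ ∀ g ∈ S, ‖g - f‖ < ε → g = f

/-- `S` is a countable union of norm-discrete sets. -/
def IsNormSigmaDiscrete {X : Type*} [NormedAddCommGroup X] [NormedSpace ℝ X]
    (S : Set (X →L[ℝ] ℝ)) : Prop :=
  ∃ T : ℕ → Set (X →L[ℝ] ℝ), S = ⋃ n, T n ∧ ∀ n, IsNormDiscrete (T n)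

/-- `f` is a weak*-accumulation point of `S`. -/
def WeakStarAccPt {X : Type*} [NormedAddCommGroup X] [NormedSpace ℝ X]
    (S : Set (X →L[ℝ] ℝ)) (f : X →L[ℝ] ℝ) : Prop :=
  ∀ U : Set (WeakDual ℝ X), IsOpen U → toWeakStar f ∈ U →
    ∃ g ∈ S, g ≠ f ∧ toWeakStar g ∈ U

/-- A boundary `B` has property (*) if every weak*-accumulation point of `B` takes values `< 1`
at every point of the unit sphere. -/
def HasPropertyStar {X : Type*} [NormedAddCommGroup X] [NormedSpace ℝ X]
    (B : Set (X →L[ℝ] ℝ)) : Prop :=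
  ∀ f : X →L[ℝ] ℝ, WeakStarAccPt B f → ∀ x₀ : X, ‖x₀‖ = 1 → f x₀ < 1

/-- `X` has the bounded approximation property. -/
def HasBAP (X : Type*) [NormedAddCommGroup X] [NormedSpace ℝ X] : Prop :=
  ∃ lam : ℝ, 1 ≤ lam ∧ ∀ (F : Finset X) (ε : ℝ), 0 < ε →
    ∃ T : X →L[ℝ] X, FiniteDimensional ℝ (LinearMap.range (T : X →ₗ[ℝ] X)) ∧
      ‖T‖ ≤ lam ∧ ∀ x ∈ F, ‖T x - x‖ < ε

namespace Ell1NB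


abbrev X1 : Type := lp (fun _ : ℕ => ℝ) 1

lemma summable_coord (x : X1) : Summable fun n => ‖x n‖ := by
  have := (lp.memℓp x).summable (p := 1) (by simp)
  simpa using this

lemma norm_eq (x : X1) : ‖x‖ = ∑' n, ‖x n‖ := by
  have := lp.norm_eq_tsum_rpow (p := 1) (by simp) x
  simpa using this

def sgn (ε : ℕ → Bool) (n : ℕ) : ℝ := if ε n then 1 else -1

lemma norm_sgn (ε : ℕ → Bool) (n : ℕ) : ‖sgn ε n‖ = 1 := by
  unfold sgn; split <;> simp

lemma sgn_mul_self (ε : ℕ → Bool) (n : ℕ) : sgn ε n * sgn ε n = 1 := by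
  unfold sgn; split <;> norm_num

lemma norm_sgn_mul (ε : ℕ → Bool) {a : ℝ} (n : ℕ) :
    ‖sgn ε n * a‖ = ‖a‖ := by
  rw [norm_mul, norm_sgn, one_mul]

lemma summable_sgn_mul (ε : ℕ → Bool) (x : ℕ → ℝ) (hx : Summable fun n => ‖x n‖) :
    Summable fun n => sgn ε n * x n := by
  refine Summable.of_norm ?_
  simpa only [norm_sgn_mul] using hx

noncomputable def phi (ε : ℕ → Bool) : X1 →L[ℝ] ℝ :=
  LinearMap.mkContinuous
    { toFun := fun x => ∑' n, sgn ε n * x n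
      map_add' := fun x y => by
        have hx := summable_sgn_mul ε x (summable_coord x)
        have hy := summable_sgn_mul ε y (summable_coord y)
        simp only [lp.coeFn_add, Pi.add_apply, mul_add]
        exact Summable.tsum_add hx hy
      map_smul' := fun c x => by
        simp only [lp.coeFn_smul, Pi.smul_apply, smul_eq_mul, RingHom.id_apply]
        rw [← tsum_mul_left]
        exact tsum_congr fun n => by ring }
    1
    (fun x => by
      have hx := summable_coord x
      have h1 : ‖∑' n, sgn ε n * x n‖ ≤ ∑' n, ‖sgn ε n * x n‖ :=
        norm_tsum_le_tsum_norm (by simpa only [norm_sgn_mul] using hx)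
      simp only [norm_sgn_mul] at h1
      simpa [norm_eq x] using h1)

lemma phi_apply (ε : ℕ → Bool) (x : X1) : phi ε x = ∑' n, sgn ε n * x n := rfl

noncomputable def e (n : ℕ) : X1 := lp.single 1 n (1 : ℝ)

lemma coe_e (n m : ℕ) : (e n : ℕ → ℝ) m = if m = n then 1 else 0 := by
  by_cases h : m = n
  · subst h; simp [e, lp.single_apply_self]
  · simp [e, lp.single_apply_ne 1 n 1 h, h]

lemma phi_single (ε : ℕ → Bool) (n : ℕ) : phi ε (e n) = sgn ε n := by
  rw [phi_apply, tsum_eq_single n]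
  · simp [coe_e]
  · intro m hm; simp [coe_e, hm]

lemma norm_e (n : ℕ) : ‖e n‖ = 1 := by
  have := lp.norm_single (p := 1) (E := fun _ : ℕ => ℝ) (by simp) n (1 : ℝ)
  simpa [e] using this

lemma apply_eq_tsum (f : X1 →L[ℝ] ℝ) (x : X1) : f x = ∑' n, x n * f (e n) := by
  have h := lp.hasSum_single (E := fun _ : ℕ => ℝ) (p := 1) (by norm_num) x
  have h2 := h.mapL f
  have h3 : ∀ n, f (lp.single 1 n (x n)) = x n * f (e n) := by
    intro n
    have hs : lp.single 1 n (x n) = x n • e n := by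
      have := lp.single_smul (E := fun _ : ℕ => ℝ) 1 n (x n) (1 : ℝ)
      rw [e, ← this, smul_eq_mul, mul_one]
    rw [hs, map_smul, smul_eq_mul]
  rw [← h2.tsum_eq]
  exact tsum_congr h3


lemma eq_of_forall_e {f g : X1 →L[ℝ] ℝ} (h : ∀ n, f (e n) = g (e n)) : f = g := by
  ext x
  rw [apply_eq_tsum f x, apply_eq_tsum g x]
  exact tsum_congr fun n => by rw [h n]

lemma phi_injective : Function.Injective phi := by
  intro ε ε' h
  funext n
  have h2 : sgn ε n = sgn ε' n := by
    rw [← phi_single ε n, ← phi_single ε' n, h]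
  cases h1 : ε n <;> cases h1' : ε' n <;> simp [sgn, h1, h1'] at h2 ⊢ <;> norm_num at h2

lemma hasSum_half : HasSum (fun n : ℕ => ((2 : ℝ)⁻¹) ^ (n + 1)) 1 := by
  have := hasSum_geometric_two' 1
  convert this using 2 with n
  rw [pow_succ, inv_pow]
  field_simp

lemma summable_half : Summable fun n : ℕ => ((2 : ℝ)⁻¹) ^ (n + 1) := hasSum_half.summable

noncomputable def xe (ε : ℕ → Bool) : X1 :=
  ⟨fun n => sgn ε n * (2 : ℝ)⁻¹ ^ (n + 1), by
    apply memℓp_gen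
    have h : (fun n : ℕ => ‖sgn ε n * (2 : ℝ)⁻¹ ^ (n + 1)‖ ^ (1 : ℝ≥0∞).toReal)
        = fun n : ℕ => ((2 : ℝ)⁻¹) ^ (n + 1) := by
      funext n
      rw [norm_sgn_mul]
      simp [abs_of_nonneg (by positivity : (0:ℝ) ≤ (2 : ℝ)⁻¹ ^ (n + 1))]
    rw [h]
    exact summable_half⟩

lemma coe_xe (ε : ℕ → Bool) (n : ℕ) : (xe ε : ℕ → ℝ) n = sgn ε n * (2 : ℝ)⁻¹ ^ (n + 1) := rfl

lemma norm_xe (ε : ℕ → Bool) : ‖xe ε‖ = 1 := by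
  rw [norm_eq]
  rw [← hasSum_half.tsum_eq]
  refine tsum_congr fun n => ?_
  rw [coe_xe, norm_sgn_mul]
  simp [abs_of_nonneg (by positivity : (0:ℝ) ≤ (2 : ℝ)⁻¹ ^ (n + 1))]


lemma boundary_contains {B : Set (X1 →L[ℝ] ℝ)} (hB : IsBoundary X1 B) (ε : ℕ → Bool) :
    phi ε ∈ B := by
  obtain ⟨f, hfB, hfx⟩ := hB.2 (xe ε)
  have hf1 : ‖f‖ = 1 := hB.1 f hfB
  suffices h : f = phi ε by rwa [← h]
  refine eq_of_forall_e fun n => ?_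
  rw [phi_single]
  set a : ℕ → ℝ := fun m => sgn ε m * f (e m) with ha
  have hale : ∀ m, a m ≤ 1 := by
    intro m
    have h1 : ‖f (e m)‖ ≤ 1 := by
      have := f.le_opNorm (e m)
      rwa [hf1, norm_e, one_mul] at this
    calc a m ≤ |a m| := le_abs_self _
      _ = ‖f (e m)‖ := by rw [ha]; exact norm_sgn_mul ε m
      _ ≤ 1 := h1
  have key : (∑' m, a m * (2 : ℝ)⁻¹ ^ (m + 1)) = 1 := by
    have h1 : f (xe ε) = ∑' m, a m * (2 : ℝ)⁻¹ ^ (m + 1) := by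
      rw [apply_eq_tsum f (xe ε)]
      exact tsum_congr fun m => by rw [coe_xe, ha]; ring
    rw [← h1, hfx, norm_xe]
  have hsum : Summable fun m => a m * (2 : ℝ)⁻¹ ^ (m + 1) := by
    refine Summable.of_norm (Summable.of_nonneg_of_le (fun m => norm_nonneg _)
      (fun m => ?_) summable_half)
    rw [norm_mul]
    calc ‖a m‖ * ‖(2 : ℝ)⁻¹ ^ (m + 1)‖ ≤ 1 * ‖(2 : ℝ)⁻¹ ^ (m + 1)‖ := by
          refine mul_le_mul_of_nonneg_right ?_ (norm_nonneg _)
          rw [ha]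
          show ‖sgn ε m * f (e m)‖ ≤ 1
          rw [norm_sgn_mul]
          have := f.le_opNorm (e m)
          rwa [hf1, norm_e, one_mul] at this
      _ = (2 : ℝ)⁻¹ ^ (m + 1) := by
          rw [one_mul]
          exact abs_of_nonneg (by positivity)
  have hpos : ∀ m : ℕ, (0:ℝ) < (2 : ℝ)⁻¹ ^ (m + 1) := fun m => by positivity
  have han : a n = 1 := by
    by_contra hne
    have hlt : a n < 1 := lt_of_le_of_ne (hale n) hne
    have hcontra : (∑' m, a m * (2 : ℝ)⁻¹ ^ (m + 1)) < ∑' m, (2 : ℝ)⁻¹ ^ (m + 1) := by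
      refine Summable.tsum_lt_tsum (i := n) (fun m => ?_) ?_ hsum summable_half
      · calc a m * (2 : ℝ)⁻¹ ^ (m + 1) ≤ 1 * (2 : ℝ)⁻¹ ^ (m + 1) :=
            mul_le_mul_of_nonneg_right (hale m) (hpos m).le
          _ = (2 : ℝ)⁻¹ ^ (m + 1) := one_mul _
      · calc a n * (2 : ℝ)⁻¹ ^ (n + 1) < 1 * (2 : ℝ)⁻¹ ^ (n + 1) :=
            mul_lt_mul_of_pos_right hlt (hpos n)
          _ = (2 : ℝ)⁻¹ ^ (n + 1) := one_mul _
    rw [key, hasSum_half.tsum_eq] at hcontra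
    exact lt_irrefl _ hcontra
  have := congrArg (fun t => sgn ε n * t) han
  simp only [ha] at this
  rw [← mul_assoc, sgn_mul_self, one_mul, mul_one] at this
  exact this

lemma continuous_phiW : Continuous fun ε : ℕ → Bool => toWeakStar (phi ε) := by
  apply WeakDual.continuous_of_continuous_eval
  intro x
  have heq : (fun ε : ℕ → Bool => (toWeakStar (phi ε)) x)
      = fun ε : ℕ → Bool => ∑' n, sgn ε n * x n := by funext ε; rfl
  rw [heq]
  refine continuous_tsum (u := fun n => ‖x n‖) (fun n => ?_) (summable_coord x)
    (fun n ε => le_of_eq (norm_sgn_mul ε n))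
  have h1 : Continuous fun ε : ℕ → Bool => ε n := continuous_apply n
  have h2 : Continuous fun b : Bool => (if b then (1:ℝ) else -1) :=
    continuous_of_discreteTopology
  exact (h2.comp h1).mul continuous_const

lemma not_isOpen_singleton (ε : ℕ → Bool) : ¬ IsOpen ({ε} : Set (ℕ → Bool)) := by
  intro h
  obtain ⟨I, u, hu, hsub⟩ := isOpen_pi_iff.mp h ε rfl
  set m := (I.sup id) + 1 with hm'
  have hm : m ∉ I := by
    intro hmem
    have := Finset.le_sup (f := id) hmem
    simp only [id] at this
    omega
  have hmem : Function.update ε m (!(ε m)) ∈ (I : Set ℕ).pi u := by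
    intro i hi
    rw [Function.update_of_ne (by rintro rfl; exact hm hi)]
    exact (hu i hi).2
  have h1 := hsub hmem
  simp only [Set.mem_singleton_iff] at h1
  have h2 := congrFun h1 m
  rw [Function.update_self] at h2
  simp at h2


theorem main (B : Set (X1 →L[ℝ] ℝ)) (hB : IsBoundary X1 B)
    (T : ℕ → Set (X1 →L[ℝ] ℝ)) (hTB : B = ⋃ n, T n)
    (hTd : ∀ n, ∀ f ∈ T n, ∃ U : Set (WeakDual ℝ X1), IsOpen U ∧ toWeakStar f ∈ U ∧
      ∀ g ∈ T n, toWeakStar g ∈ U → g = f) : False := by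
  classical
  set A : ℕ → Set (ℕ → Bool) := fun n => {ε | phi ε ∈ T n} with hA
  have hcover : ⋃ n, closure (A n) = Set.univ := by
    refine Set.eq_univ_of_forall fun ε => ?_
    have h1 : phi ε ∈ ⋃ n, T n := hTB ▸ boundary_contains hB ε
    obtain ⟨n, hn⟩ := Set.mem_iUnion.mp h1
    exact Set.mem_iUnion.mpr ⟨n, subset_closure hn⟩
  obtain ⟨n, hn⟩ := nonempty_interior_of_iUnion_of_closed
    (fun n => isClosed_closure) hcover
  set W := interior (closure (A n)) with hW
  obtain ⟨w, hw⟩ := hn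
  obtain ⟨ε, hεW, hεA⟩ : ∃ ε, ε ∈ W ∧ ε ∈ A n := by
    have hwc : w ∈ closure (A n) := interior_subset hw
    rcases mem_closure_iff.mp hwc W isOpen_interior hw with ⟨ε, h1, h2⟩
    exact ⟨ε, h1, h2⟩
  obtain ⟨U, hUopen, hUmem, hUiso⟩ := hTd n (phi ε) hεA
  set V := (fun ε' : ℕ → Bool => toWeakStar (phi ε')) ⁻¹' U with hV
  have hVopen : IsOpen V := hUopen.preimage continuous_phiW
  have hεV : ε ∈ V := hUmem
  have hsub : V ∩ W ⊆ {ε} := by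
    have h1 : V ∩ W ⊆ closure ((V ∩ W) ∩ A n) := by
      intro y hy
      have hy2 : y ∈ (V ∩ W) ∩ closure (A n) := ⟨hy, interior_subset hy.2⟩
      exact (hVopen.inter isOpen_interior).inter_closure hy2
    have h2 : (V ∩ W) ∩ A n ⊆ {ε} := by
      rintro y ⟨⟨hyV, _⟩, hyA⟩
      exact phi_injective (hUiso (phi y) hyA hyV)
    intro y hy
    have h3 := closure_mono h2 (h1 hy)
    rwa [closure_singleton] at h3
  have hopen : IsOpen ({ε} : Set (ℕ → Bool)) := by
    have heq : V ∩ W = {ε} :=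
      Set.Subset.antisymm hsub (Set.singleton_subset_iff.mpr ⟨hεV, hεW⟩)
    rw [← heq]
    exact hVopen.inter isOpen_interior
  exact not_isOpen_singleton ε hopen

end Ell1NB

/-- `ℓ₁` admits no boundary that is σ-discrete in the weak* topology. -/
theorem ell1_no_weakStar_sigmaDiscrete_boundary
    (B : Set ((lp (fun _ : ℕ => ℝ) 1) →L[ℝ] ℝ))
    (hB : IsBoundary (lp (fun _ : ℕ => ℝ) 1) B) :
    ¬ IsWeakStarSigmaDiscrete B := by
  rintro ⟨T, hTB, hTd⟩
  exact Ell1NB.main B hB T hTB hTd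
end

section
/- For any sets κ and I, every twisted sum Z of c₀(κ) and c₀(I) is isomorphically polyhedral. -/
open scoped ENNReal

open Filter in
lemma ZAI_finite {α : Type} [TopologicalSpace α] [DiscreteTopology α]
    (y : ZeroAtInftyContinuousMap α ℝ) {ε : ℝ} (hε : 0 < ε) :
    {k : α | ε ≤ |y k|}.Finite := by
  have h : Tendsto y (cocompact α) (nhds 0) := y.zero_at_infty'
  rw [cocompact_eq_cofinite] at h
  have h2 : ∀ᶠ k in cofinite, |y k| < ε := by
    filter_upwards [h (Metric.ball_mem_nhds (0:ℝ) hε)] with k hk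
    simpa [Real.dist_eq] using hk
  have h3 := Filter.eventually_cofinite.mp h2
  refine h3.subset ?_
  intro k hk
  simpa using not_lt.mpr hk

lemma ZAI_coord_le {α : Type} [TopologicalSpace α] (y : ZeroAtInftyContinuousMap α ℝ) (k : α) :
    |y k| ≤ ‖y‖ := by
  have := BoundedContinuousFunction.norm_coe_le_norm y.toBCF k
  rwa [ZeroAtInftyContinuousMap.norm_toBCF_eq_norm] at this

lemma ZAI_norm_le {α : Type} [TopologicalSpace α] (y : ZeroAtInftyContinuousMap α ℝ) {D : ℝ}
    (hD : 0 ≤ D) (h : ∀ k, |y k| ≤ D) : ‖y‖ ≤ D := by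
  rw [← ZeroAtInftyContinuousMap.norm_toBCF_eq_norm]
  exact (BoundedContinuousFunction.norm_le hD).2 h


lemma exists_coord_functionals {κ : Type} [TopologicalSpace κ] [DiscreteTopology κ]
    {Z : Type} [NormedAddCommGroup Z] [NormedSpace ℝ Z]
    (j : ZeroAtInftyContinuousMap κ ℝ →L[ℝ] Z) {c : ℝ} (hc : 0 < c)
    (hj : ∀ y, c * ‖y‖ ≤ ‖j y‖) (k : κ) :
    ∃ f : Z →L[ℝ] ℝ, (∀ y, f (j y) = y k) ∧ ∀ z, |f z| ≤ c⁻¹ * ‖z‖ := by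
  have hC : 0 < c⁻¹ := inv_pos.mpr hc
  have hjinj : Function.Injective j := by
    intro y1 y2 h
    have h1 : c * ‖y1 - y2‖ ≤ ‖j (y1 - y2)‖ := hj _
    rw [map_sub, h, sub_self, norm_zero] at h1
    have h2 : ‖y1 - y2‖ ≤ 0 := by nlinarith [norm_nonneg (y1 - y2)]
    rwa [norm_le_zero_iff, sub_eq_zero] at h2
  set Jl : ZeroAtInftyContinuousMap κ ℝ →ₗ[ℝ] Z :=
    (j : ZeroAtInftyContinuousMap κ ℝ →ₗ[ℝ] Z) with hJldef
  have hJlapp : ∀ y, Jl y = j y := fun y => rfl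
  have hjinj' : Function.Injective Jl := hjinj
  set eq1 := LinearEquiv.ofInjective Jl hjinj' with heq1
  set φl : LinearMap.range Jl →ₗ[ℝ] ℝ :=
    { toFun := fun w => (eq1.symm w) k
      map_add' := by intro u v; simp
      map_smul' := by intro a u; simp } with hφl
  have hnorm : ∀ y : ZeroAtInftyContinuousMap κ ℝ, ‖y‖ ≤ c⁻¹ * ‖j y‖ := by
    intro y
    have h := hj y
    calc ‖y‖ = c⁻¹ * (c * ‖y‖) := by field_simp
    _ ≤ c⁻¹ * ‖j y‖ := by gcongr
  have hφlb : ∀ w : LinearMap.range Jl, ‖φl w‖ ≤ c⁻¹ * ‖w‖ := by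
    intro w
    set y := eq1.symm w with hy
    have hwy : (w : Z) = Jl y := by
      have h : eq1 y = w := eq1.apply_symm_apply w
      rw [← h, heq1, LinearEquiv.ofInjective_apply]
    have h1 : |y k| ≤ ‖y‖ := ZAI_coord_le y k
    have h3 : ‖w‖ = ‖j y‖ := by rw [Submodule.coe_norm, hwy, hJlapp]
    have : ‖φl w‖ = |y k| := by rw [hφl]; simp [Real.norm_eq_abs, hy]
    rw [this, h3]
    exact h1.trans (hnorm y)
  set φ : LinearMap.range Jl →L[ℝ] ℝ := LinearMap.mkContinuous φl c⁻¹ hφlb with hφdef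
  obtain ⟨f, hfext, hfnorm⟩ := exists_extension_norm_eq (LinearMap.range Jl) φ
  have hφnorm : ‖φ‖ ≤ c⁻¹ := LinearMap.mkContinuous_norm_le φl hC.le hφlb
  refine ⟨f, ?_, ?_⟩
  · intro y
    have hmem : j y ∈ LinearMap.range Jl := ⟨y, rfl⟩
    have h1 : f (j y) = φ ⟨j y, hmem⟩ := by
      have := hfext ⟨j y, hmem⟩
      simpa using this
    have h2 : eq1.symm ⟨Jl y, LinearMap.mem_range_self Jl y⟩ = y := by
      apply eq1.injective
      rw [eq1.apply_symm_apply]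
      rw [heq1]
      ext
      rw [LinearEquiv.ofInjective_apply]
    rw [h1]
    show φl ⟨j y, hmem⟩ = y k
    rw [hφl]
    show (eq1.symm ⟨j y, hmem⟩) k = y k
    have : (⟨j y, hmem⟩ : LinearMap.range Jl) = ⟨Jl y, LinearMap.mem_range_self Jl y⟩ := rfl
    rw [this, h2]
  · intro z
    have := f.le_opNorm z
    rw [hfnorm] at this
    calc |f z| = ‖f z‖ := (Real.norm_eq_abs _).symm
    _ ≤ ‖φ‖ * ‖z‖ := this
    _ ≤ c⁻¹ * ‖z‖ := by gcongr

set_option synthInstance.maxHeartbeats 1000000 in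
set_option maxHeartbeats 1000000 in
lemma isPolyhedral_of_family {P : Type} [NormedAddCommGroup P] [NormedSpace ℝ P]
    {ι : Type} (g : ι → P →ₗ[ℝ] ℝ)
    (hb : ∀ (ix : ι) (x : P), |g ix x| ≤ ‖x‖)
    (hatt : ∀ x : P, ‖x‖ = 1 → ∀ η : ℝ, 0 < η → ∃ ix, 1 - η < |g ix x|)
    {θ : ℝ} (hθ0 : 0 ≤ θ) (hθ : θ < 1)
    (hfin : ∀ F : Set P, F.Finite → (∀ p ∈ F, ‖p‖ = 1) → ∀ δ : ℝ, 0 < δ →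
      ∃ s : Set ι, s.Finite ∧ ∀ ix ∉ s, ∀ p ∈ F, |g ix p| ≤ θ + δ) :
    IsPolyhedral P := by
  intro S hFD
  haveI := hFD
  set δ : ℝ := (1 - θ) / 4 with hδdef
  have hδ : 0 < δ := by rw [hδdef]; linarith
  obtain ⟨t, hts, htfin, hcover⟩ := (isCompact_sphere (0 : S) 1).finite_cover_balls hδ
  set F : Set P := (fun v : S => (v : P)) '' t with hFdef
  have hFfin : F.Finite := htfin.image _
  have hFnorm : ∀ p ∈ F, ‖p‖ = 1 := by
    rintro p ⟨v, hvt, rfl⟩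
    have : ‖v‖ = 1 := by simpa [mem_sphere_zero_iff_norm] using hts hvt
    simpa [Submodule.coe_norm] using this
  obtain ⟨s, hsfin, hs⟩ := hfin F hFfin hFnorm δ hδ
  haveI : Fintype s := hsfin.fintype
  set n := Fintype.card s with hndef
  set e : s ≃ Fin n := Fintype.equivFin s with hedef
  set Tl : S →ₗ[ℝ] (Fin n → ℝ) :=
    { toFun := fun v r => g ((e.symm r) : ι) (v : P)
      map_add' := by intro u v; funext r; simp
      map_smul' := by intro c v; funext r; simp } with hTdef
  refine ⟨n, Tl, ?_⟩
  have key : ∀ u : S, ‖u‖ = 1 → ‖Tl u‖ = 1 := by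
    intro u hu
    have hcu : ‖(u : P)‖ = 1 := by simpa [Submodule.coe_norm] using hu
    have hle : ‖Tl u‖ ≤ 1 := by
      refine (pi_norm_le_iff_of_nonneg zero_le_one).2 fun r => ?_
      simpa [hTdef, Real.norm_eq_abs, hcu] using (hb ((e.symm r) : ι) (u : P)).trans_eq hcu
    have hmem : u ∈ Metric.sphere (0 : S) 1 := by
      simp [mem_sphere_zero_iff_norm, hu]
    obtain ⟨v₀, hv₀t, huv₀⟩ : ∃ v₀ ∈ t, u ∈ Metric.ball v₀ δ := by
      simpa using hcover hmem
    have hdist : ‖u - v₀‖ < δ := by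
      simpa [dist_eq_norm] using huv₀
    have main : ∀ η : ℝ, 0 < η → η < δ → 1 - η ≤ ‖Tl u‖ := by
      intro η hη hηδ
      obtain ⟨ix, hix⟩ := hatt (u : P) hcu η hη
      have hgv₀ : θ + δ < |g ix (v₀ : P)| := by
        have h1 : |g ix ((u : P) - (v₀ : P))| ≤ ‖u - v₀‖ := by
          have := hb ix ((u : P) - (v₀ : P))
          simpa [Submodule.coe_norm] using this
        have h2 : |g ix (u : P)| - |g ix (v₀ : P)| ≤ ‖u - v₀‖ := by
          have := abs_sub_abs_le_abs_sub (g ix (u : P)) (g ix (v₀ : P))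
          have h3 : g ix (u : P) - g ix (v₀ : P) = g ix ((u : P) - (v₀ : P)) := by
            simp
          rw [h3] at this
          exact this.trans h1
        have h4δ : 1 - θ = 4 * δ := by rw [hδdef]; ring
        nlinarith [hdist, hix]
      have hixs : ix ∈ s := by
        by_contra hns
        have := hs ix hns (v₀ : P) ⟨v₀, hv₀t, rfl⟩
        exact absurd this (not_le.mpr hgv₀)
      have : |g ix (u : P)| ≤ ‖Tl u‖ := by
        have := norm_le_pi_norm (Tl u) (e ⟨ix, hixs⟩)
        simpa [hTdef, Real.norm_eq_abs] using this
      linarith [hix]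
    by_contra hne
    have hlt : ‖Tl u‖ < 1 := lt_of_le_of_ne hle hne
    set η : ℝ := min (δ / 2) ((1 - ‖Tl u‖) / 2) with hηdef
    have hη : 0 < η := by
      apply lt_min <;> linarith
    have hηδ : η < δ := by
      have := min_le_left (δ / 2) ((1 - ‖Tl u‖) / 2)
      linarith
    have := main η hη hηδ
    have h2 : η ≤ (1 - ‖Tl u‖) / 2 := min_le_right _ _
    linarith
  intro v
  by_cases hv : v = 0
  · simp [hv]
  · have hvn : ‖v‖ ≠ 0 := norm_ne_zero_iff.mpr hv
    set u : S := ‖v‖⁻¹ • v with hudef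
    have hu : ‖u‖ = 1 := by
      rw [hudef, norm_smul, norm_inv, norm_norm, inv_mul_cancel₀ hvn]
    have hvu : v = ‖v‖ • u := by
      rw [hudef, smul_smul, mul_inv_cancel₀ hvn, one_smul]
    calc ‖Tl v‖ = ‖Tl (‖v‖ • u)‖ := by rw [← hvu]
    _ = ‖v‖ * ‖Tl u‖ := by rw [map_smul, norm_smul, Real.norm_eq_abs, abs_of_nonneg (norm_nonneg v)]
    _ = ‖v‖ := by rw [key u hu, mul_one]


set_option maxHeartbeats 1000000 in
set_option synthInstance.maxHeartbeats 1000000 in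
/-- Every twisted sum of `c₀(κ)` and `c₀(I)` is isomorphically polyhedral.
Here `c₀(·)` is realized as the space of real functions vanishing at infinity for the
discrete topology. -/
theorem twistedSum_c0_c0_isomorphicallyPolyhedral
    (κ : Type) [TopologicalSpace κ] [DiscreteTopology κ]
    (I : Type) [TopologicalSpace I] [DiscreteTopology I]
    (Z : Type) [NormedAddCommGroup Z] [NormedSpace ℝ Z] [CompleteSpace Z]
    (hZ : IsTwistedSum (ZeroAtInftyContinuousMap κ ℝ) Z (ZeroAtInftyContinuousMap I ℝ)) :
    IsomorphicallyPolyhedral Z := by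
  classical
  obtain ⟨j, q, ⟨c, hc, hj⟩, hq, hexact⟩ := hZ
  -- coordinate functionals
  choose f hfj hfb using fun k : κ => exists_coord_functionals j hc hj k
  set C : ℝ := c⁻¹ with hCdef
  have hC : 0 < C := inv_pos.mpr hc
  -- bounded selection for q
  obtain ⟨M, hM0, hMle⟩ := q.exists_preimage_norm_le hq
  choose lift hlift hliftn using hMle
  -- constants
  set a : ℝ := C * M + 1 with hadef
  have ha : 0 < a := by positivity
  have ha1 : 1 ≤ a := by nlinarith
  set θ : ℝ := C * M / a with hθdef
  have hθ0 : 0 ≤ θ := by positivity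
  have hθ1 : θ < 1 := by
    rw [hθdef, div_lt_one ha]
    nlinarith
  -- the target space W and the embedding Tl
  set Φl : Z →ₗ[ℝ] BoundedContinuousFunction κ ℝ :=
    { toFun := fun z => BoundedContinuousFunction.ofNormedAddCommGroup (fun k => f k z)
        continuous_of_discreteTopology (C * ‖z‖) (fun k => by
          simpa [Real.norm_eq_abs] using hfb k z)
      map_add' := by
        intro z1 z2
        ext k
        simp [BoundedContinuousFunction.coe_ofNormedAddCommGroup]
      map_smul' := by
        intro r z
        ext k
        simp [BoundedContinuousFunction.coe_ofNormedAddCommGroup] } with hΦldef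
  have hΦapp : ∀ (z : Z) (k : κ), Φl z k = f k z := fun z k => rfl
  have hΦnorm : ∀ z : Z, ‖Φl z‖ ≤ C * ‖z‖ := by
    intro z
    refine (BoundedContinuousFunction.norm_le (by positivity)).2 fun k => ?_
    rw [hΦapp z k, Real.norm_eq_abs]
    exact hfb k z
  set Tl : Z →ₗ[ℝ] (ZeroAtInftyContinuousMap I ℝ) × (BoundedContinuousFunction κ ℝ) :=
    { toFun := fun z => (a • q z, Φl z)
      map_add' := by
        intro z1 z2
        have h1 : a • q (z1 + z2) = a • q z1 + a • q z2 := by rw [map_add]; exact smul_add a (q z1) (q z2)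
        show (a • q (z1 + z2), Φl (z1 + z2)) = (a • q z1, Φl z1) + (a • q z2, Φl z2)
        rw [Prod.mk_add_mk, h1, map_add]
      map_smul' := by
        intro r z
        have h1 : a • q (r • z) = r • (a • q z) := by rw [map_smul, smul_comm r a]
        show (a • q (r • z), Φl (r • z)) = r • (a • q z, Φl z)
        rw [Prod.smul_mk, h1, map_smul] } with hTldef
  have hTlapp : ∀ z : Z, Tl z = (a • q z, Φl z) := fun z => rfl
  have hTlnorm : ∀ z : Z, ‖Tl z‖ = max (a * ‖q z‖) ‖Φl z‖ := by
    intro z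
    calc ‖Tl z‖ = max ‖a • q z‖ ‖Φl z‖ := by rw [hTlapp]; rfl
    _ = max (a * ‖q z‖) ‖Φl z‖ := by
      congr 1
      rw [← ZeroAtInftyContinuousMap.norm_toBCF_eq_norm, ← ZeroAtInftyContinuousMap.norm_toBCF_eq_norm]
      have h : (a • q z).toBCF = a • (q z).toBCF := rfl
      rw [h, norm_smul, Real.norm_eq_abs, abs_of_pos ha]
  -- upper bound
  set A : ℝ := max (a * ‖q‖) C with hAdef
  have hupper : ∀ z : Z, ‖Tl z‖ ≤ A * ‖z‖ := by
    intro z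
    rw [hTlnorm]
    refine max_le ?_ ?_
    · calc a * ‖q z‖ ≤ a * (‖q‖ * ‖z‖) := by gcongr; exact q.le_opNorm z
      _ = (a * ‖q‖) * ‖z‖ := by ring
      _ ≤ A * ‖z‖ := by gcongr; exact le_max_left _ _
    · calc ‖Φl z‖ ≤ C * ‖z‖ := hΦnorm z
      _ ≤ A * ‖z‖ := by gcongr; exact le_max_right _ _
  -- components are dominated by ‖Tl z‖
  have hq_le : ∀ z : Z, a * ‖q z‖ ≤ ‖Tl z‖ := fun z => (hTlnorm z) ▸ le_max_left _ _
  have hΦ_le : ∀ z : Z, ‖Φl z‖ ≤ ‖Tl z‖ := fun z => (hTlnorm z) ▸ le_max_right _ _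
  have hqz_le : ∀ z : Z, ‖q z‖ ≤ ‖Tl z‖ := by
    intro z
    have h1 := hq_le z
    nlinarith [norm_nonneg (q z)]
  -- decomposition z = j y + lift (q z)
  have hyex : ∀ z : Z, ∃ y, j y = z - lift (q z) := by
    intro z
    refine (hexact _).mpr ?_
    rw [map_sub, hlift, sub_self]
  choose yf hyf using hyex
  -- lower bound
  set K : ℝ := ‖j‖ * (1 + C * M) + M with hKdef
  have hK0 : 0 ≤ K := by positivity
  have hyf_bound : ∀ z : Z, ‖yf z‖ ≤ ‖Φl z‖ + C * (M * ‖q z‖) := by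
    intro z
    refine ZAI_norm_le _ (by positivity) fun k => ?_
    have e1 : f k (j (yf z)) = yf z k := hfj k (yf z)
    have e2 : f k (j (yf z)) = f k z - f k (lift (q z)) := by rw [hyf z, map_sub]
    have e3 : |f k z| ≤ ‖Φl z‖ := by
      have := BoundedContinuousFunction.norm_coe_le_norm (Φl z) k
      rwa [hΦapp z k, Real.norm_eq_abs] at this
    have e4 : |f k (lift (q z))| ≤ C * ‖lift (q z)‖ := hfb k _
    have e5 : C * ‖lift (q z)‖ ≤ C * (M * ‖q z‖) := by gcongr; exact hliftn (q z)
    calc |yf z k| = |f k z - f k (lift (q z))| := by rw [← e1, e2]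
    _ ≤ |f k z| + |f k (lift (q z))| := abs_sub _ _
    _ ≤ ‖Φl z‖ + C * (M * ‖q z‖) := add_le_add e3 (e4.trans e5)
  have hlower : ∀ z : Z, ‖z‖ ≤ K * ‖Tl z‖ := by
    intro z
    have hdecomp : z = j (yf z) + lift (q z) := by rw [hyf z]; abel
    have h1 : ‖z‖ ≤ ‖j‖ * ‖yf z‖ + M * ‖q z‖ := by
      calc ‖z‖ = ‖j (yf z) + lift (q z)‖ := by rw [← hdecomp]
      _ ≤ ‖j (yf z)‖ + ‖lift (q z)‖ := norm_add_le _ _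
      _ ≤ ‖j‖ * ‖yf z‖ + M * ‖q z‖ := add_le_add (j.le_opNorm _) (hliftn _)
    have h2 := hyf_bound z
    have h3 := hΦ_le z
    have h4 := hqz_le z
    have h5 : ‖yf z‖ ≤ (1 + C * M) * ‖Tl z‖ := by nlinarith [norm_nonneg (q z)]
    have h6 : ‖j‖ * ‖yf z‖ ≤ ‖j‖ * ((1 + C * M) * ‖Tl z‖) := by gcongr
    have h7 : M * ‖q z‖ ≤ M * ‖Tl z‖ := by gcongr
    calc ‖z‖ ≤ ‖j‖ * ‖yf z‖ + M * ‖q z‖ := h1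
    _ ≤ ‖j‖ * ((1 + C * M) * ‖Tl z‖) + M * ‖Tl z‖ := add_le_add h6 h7
    _ = K * ‖Tl z‖ := by rw [hKdef]; ring
  -- injectivity
  have hinj0 : ∀ z : Z, Tl z = 0 → z = 0 := by
    intro z h0
    have h1 : ‖z‖ ≤ K * ‖Tl z‖ := hlower z
    rw [h0, norm_zero, mul_zero] at h1
    exact norm_le_zero_iff.mp h1
  have hTinj : Function.Injective Tl := by
    intro z1 z2 h
    have := hinj0 (z1 - z2) (by rw [map_sub, h, sub_self])
    exact sub_eq_zero.mp this
  -- the subspace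
  set Sp : Submodule ℝ ((ZeroAtInftyContinuousMap I ℝ) × (BoundedContinuousFunction κ ℝ)) :=
    LinearMap.range Tl with hSpdef
  -- completeness of Sp
  set Tc : Z →L[ℝ] (ZeroAtInftyContinuousMap I ℝ) × (BoundedContinuousFunction κ ℝ) :=
    Tl.mkContinuous A hupper with hTcdef
  have hTcapp : ∀ z, Tc z = Tl z := fun z => rfl
  have hanti : AntilipschitzWith ⟨K, hK0⟩ Tc := by
    refine Tc.antilipschitz_of_bound fun z => ?_
    rw [hTcapp]
    exact hlower z
  have hclosed : IsClosed (Sp : Set (ZeroAtInftyContinuousMap I ℝ × BoundedContinuousFunction κ ℝ)) := by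
    have h1 : IsClosed (Set.range Tc) := hanti.isClosed_range Tc.uniformContinuous
    have h2 : (Sp : Set (ZeroAtInftyContinuousMap I ℝ × BoundedContinuousFunction κ ℝ)) = Set.range ⇑Tc := by
      ext w
      simp only [hSpdef, SetLike.mem_coe, LinearMap.mem_range, Set.mem_range]
      constructor
      · rintro ⟨z, rfl⟩; exact ⟨z, rfl⟩
      · rintro ⟨z, rfl⟩; exact ⟨z, rfl⟩
    rw [h2]
    exact h1
  haveI hcompl : CompleteSpace Sp := hclosed.completeSpace_coe
  -- the equivalence
  set le0 := LinearEquiv.ofInjective Tl hTinj with hle0def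
  have hle0app : ∀ z : Z, ((le0 z : Sp) : ZeroAtInftyContinuousMap I ℝ × BoundedContinuousFunction κ ℝ) = Tl z := fun z => rfl
  have h_to : ∀ z : Z, ‖le0 z‖ ≤ A * ‖z‖ := by
    intro z
    rw [Submodule.coe_norm, hle0app]
    exact hupper z
  have h_inv : ∀ w : Sp, ‖le0.symm w‖ ≤ K * ‖w‖ := by
    intro w
    have h1 : Tl (le0.symm w) = (w : ZeroAtInftyContinuousMap I ℝ × BoundedContinuousFunction κ ℝ) := by
      rw [← hle0app, le0.apply_symm_apply]
    calc ‖le0.symm w‖ ≤ K * ‖Tl (le0.symm w)‖ := hlower _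
    _ = K * ‖w‖ := by rw [h1, ← Submodule.coe_norm]
  have eqv : Z ≃L[ℝ] Sp :=
    { le0 with
      continuous_toFun := by
        exact AddMonoidHomClass.continuous_of_bound le0 A h_to
      continuous_invFun := by
        exact AddMonoidHomClass.continuous_of_bound le0.symm K h_inv }
  -- polyhedrality of Sp
  have hpoly : IsPolyhedral Sp := by
    -- the coordinate family
    set gI : I → (Sp →ₗ[ℝ] ℝ) := fun i =>
      { toFun := fun p => (p : ZeroAtInftyContinuousMap I ℝ × BoundedContinuousFunction κ ℝ).1 i
        map_add' := by intro p1 p2; simp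
        map_smul' := by intro r p; simp } with hgIdef
    set gK : κ → (Sp →ₗ[ℝ] ℝ) := fun k =>
      { toFun := fun p => (p : ZeroAtInftyContinuousMap I ℝ × BoundedContinuousFunction κ ℝ).2 k
        map_add' := by intro p1 p2; simp
        map_smul' := by intro r p; simp } with hgKdef
    set g : I ⊕ κ → (Sp →ₗ[ℝ] ℝ) := Sum.elim gI gK with hgdef
    have hgI : ∀ (i : I) (p : Sp), g (Sum.inl i) p = (p : ZeroAtInftyContinuousMap I ℝ × BoundedContinuousFunction κ ℝ).1 i := fun i p => rfl
    have hgK : ∀ (k : κ) (p : Sp), g (Sum.inr k) p = (p : ZeroAtInftyContinuousMap I ℝ × BoundedContinuousFunction κ ℝ).2 k := fun k p => rfl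
    have hnormP : ∀ p : Sp, ‖p‖ = max ‖(p : ZeroAtInftyContinuousMap I ℝ × BoundedContinuousFunction κ ℝ).1‖ ‖(p : ZeroAtInftyContinuousMap I ℝ × BoundedContinuousFunction κ ℝ).2‖ := by
      intro p
      rw [Submodule.coe_norm, Prod.norm_def]
    refine isPolyhedral_of_family g ?_ ?_ hθ0 hθ1 ?_
    · -- bound
      intro ix p
      rcases ix with i | k
      · rw [hgI]
        refine (ZAI_coord_le _ i).trans ?_
        rw [hnormP]
        exact le_max_left _ _
      · rw [hgK]
        have := BoundedContinuousFunction.norm_coe_le_norm (p : ZeroAtInftyContinuousMap I ℝ × BoundedContinuousFunction κ ℝ).2 k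
        rw [Real.norm_eq_abs] at this
        refine this.trans ?_
        rw [hnormP]
        exact le_max_right _ _
    · -- approximate attainment
      intro p hp η hη
      by_contra hcon
      push_neg at hcon
      set D : ℝ := max (1 - η) 0 with hDdef
      have hD0 : 0 ≤ D := le_max_right _ _
      have hD1 : D < 1 := max_lt (by linarith) one_pos
      have h1 : ‖(p : ZeroAtInftyContinuousMap I ℝ × BoundedContinuousFunction κ ℝ).1‖ ≤ D := by
        refine ZAI_norm_le _ hD0 fun i => ?_
        have := hcon (Sum.inl i)
        rw [hgI] at this
        exact this.trans (le_max_left _ _)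
      have h2 : ‖(p : ZeroAtInftyContinuousMap I ℝ × BoundedContinuousFunction κ ℝ).2‖ ≤ D := by
        refine (BoundedContinuousFunction.norm_le hD0).2 fun k => ?_
        have := hcon (Sum.inr k)
        rw [hgK] at this
        rw [Real.norm_eq_abs]
        exact this.trans (le_max_left _ _)
      have : (1 : ℝ) ≤ D := by
        rw [← hp, hnormP]
        exact max_le h1 h2
      linarith
    · -- finiteness off a finite set
      intro F hFfin hFnorm δ hδ
      have hzex : ∀ p : Sp, ∃ z, Tl z = (p : ZeroAtInftyContinuousMap I ℝ × BoundedContinuousFunction κ ℝ) := fun p => p.2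
      choose zf hzf using hzex
      set s : Set (I ⊕ κ) := ⋃ p ∈ F,
        ((Sum.inl '' {i : I | δ ≤ |(p : ZeroAtInftyContinuousMap I ℝ × BoundedContinuousFunction κ ℝ).1 i|}) ∪
         (Sum.inr '' {k : κ | δ ≤ |yf (zf p) k|})) with hsdef
      refine ⟨s, ?_, ?_⟩
      · refine hFfin.biUnion fun p _ => Set.Finite.union ?_ ?_
        · exact (ZAI_finite _ hδ).image _
        · exact (ZAI_finite _ hδ).image _
      · intro ix hix p hpF
        have hnot : ix ∉ (Sum.inl '' {i : I | δ ≤ |(p : ZeroAtInftyContinuousMap I ℝ × BoundedContinuousFunction κ ℝ).1 i|}) ∪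
            (Sum.inr '' {k : κ | δ ≤ |yf (zf p) k|}) := by
          intro hmem
          exact hix (Set.mem_biUnion hpF hmem)
        rcases ix with i | k
        · have hi : i ∉ {i : I | δ ≤ |(p : ZeroAtInftyContinuousMap I ℝ × BoundedContinuousFunction κ ℝ).1 i|} := by
            intro h
            exact hnot (Or.inl ⟨i, h, rfl⟩)
          have : |(p : ZeroAtInftyContinuousMap I ℝ × BoundedContinuousFunction κ ℝ).1 i| < δ := not_le.mp hi
          rw [hgI]
          linarith
        · have hk : k ∉ {k : κ | δ ≤ |yf (zf p) k|} := by
            intro h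
            exact hnot (Or.inr ⟨k, h, rfl⟩)
          have hyk : |yf (zf p) k| < δ := not_le.mp hk
          set z : Z := zf p with hzdef2
          have hpz : (p : ZeroAtInftyContinuousMap I ℝ × BoundedContinuousFunction κ ℝ) = Tl z := (hzf p).symm
          have hp2 : (p : ZeroAtInftyContinuousMap I ℝ × BoundedContinuousFunction κ ℝ).2 k = f k z := by rw [hpz, hTlapp]; exact hΦapp z k
          -- decompose f k z
          have e1 : f k z = yf z k + f k (lift (q z)) := by
            have := hfj k (yf z)
            rw [hyf z, map_sub] at this
            linarith
          have hqz1 : a * ‖q z‖ ≤ 1 := by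
            have h1 := hq_le z
            have h2 : ‖Tl z‖ = 1 := by
              rw [← hpz, ← Submodule.coe_norm]
              exact hFnorm p hpF
            linarith
          have e2 : |f k (lift (q z))| ≤ θ := by
            have h1 : |f k (lift (q z))| ≤ C * ‖lift (q z)‖ := hfb k _
            have h2 : C * ‖lift (q z)‖ ≤ C * (M * ‖q z‖) := by gcongr; exact hliftn (q z)
            have h3 : ‖q z‖ ≤ 1 / a := by
              rw [le_div_iff₀ ha]
              linarith [hqz1]
            have h4 : C * (M * ‖q z‖) ≤ C * M * (1 / a) := by
              rw [← mul_assoc]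
              gcongr
            have h5 : C * M * (1 / a) = θ := by rw [hθdef]; ring
            linarith
          rw [hgK, hp2, e1]
          calc |yf z k + f k (lift (q z))| ≤ |yf z k| + |f k (lift (q z))| := abs_add_le _ _
          _ ≤ δ + θ := add_le_add hyk.le e2
          _ = θ + δ := by ring
  exact ⟨Sp, inferInstance, inferInstance, hcompl, hpoly, ⟨eqv⟩⟩
end

section
/- The set S = {f_ε : ε ∈ {−1,1}^ℕ} ⊆ (ℓ₁)*, where f_ε(x) = Σ_n ε_n x_n, is not weak*-σ-discrete: S cannot be written as a countable union of subsets each of which is discrete in its relative weak* topology. -/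
open scoped ENNReal

/-- `f` is the sign functional `f_ε : ℓ₁ → ℝ`, `f_ε x = ∑ n, ε n * x n`, for the sign
sequence `ε ∈ {−1, 1}^ℕ`. -/
def IsSignFunctional (ε : ℕ → ℝ) (f : (lp (fun _ : ℕ => ℝ) 1) →L[ℝ] ℝ) : Prop :=
  (∀ n, ε n = 1 ∨ ε n = -1) ∧
    ∀ x : lp (fun _ : ℕ => ℝ) 1, f x = ∑' n, ε n * (x : ∀ _ : ℕ, ℝ) n

noncomputable section

abbrev X1 := lp (fun _ : ℕ => ℝ) 1

lemma summable_norm_X1 (x : X1) : Summable fun n => ‖(x : ∀ _ : ℕ, ℝ) n‖ := by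
  have := (lp.memℓp x).summable (p := 1) (by norm_num)
  simpa using this

lemma norm_X1 (x : X1) : ‖x‖ = ∑' n, ‖(x : ∀ _ : ℕ, ℝ) n‖ := by
  have := lp.norm_eq_tsum_rpow (p := 1) (by norm_num) x
  simpa using this

lemma summable_sign {ε : ℕ → ℝ} (hε : ∀ n, ε n = 1 ∨ ε n = -1) (x : X1) :
    Summable fun n => ε n * (x : ∀ _ : ℕ, ℝ) n := by
  refine Summable.of_norm_bounded (summable_norm_X1 x) ?_
  intro n
  rcases hε n with h | h <;> simp [h]

def signCLM (ε : ℕ → ℝ) (hε : ∀ n, ε n = 1 ∨ ε n = -1) : X1 →L[ℝ] ℝ :=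
  LinearMap.mkContinuous
    { toFun := fun x => ∑' n, ε n * (x : ∀ _ : ℕ, ℝ) n
      map_add' := fun x y => by
        simp only [lp.coeFn_add, Pi.add_apply, mul_add]
        exact Summable.tsum_add (summable_sign hε x) (summable_sign hε y)
      map_smul' := fun c x => by
        simp only [lp.coeFn_smul, Pi.smul_apply, smul_eq_mul, RingHom.id_apply]
        rw [← tsum_mul_left]
        exact tsum_congr fun n => by ring }
    1
    (fun x => by
      have h1 : ‖∑' n, ε n * (x : ∀ _ : ℕ, ℝ) n‖ ≤ ∑' n, ‖ε n * (x : ∀ _ : ℕ, ℝ) n‖ :=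
        norm_tsum_le_tsum_norm ((summable_sign hε x).norm)
      have h2 : (∑' n, ‖ε n * (x : ∀ _ : ℕ, ℝ) n‖) = ∑' n, ‖(x : ∀ _ : ℕ, ℝ) n‖ :=
        tsum_congr fun n => by rcases hε n with h | h <;> simp [h]
      rw [one_mul, norm_X1, ← h2]
      exact h1)

lemma isSignFunctional_signCLM (ε : ℕ → ℝ) (hε : ∀ n, ε n = 1 ∨ ε n = -1) :
    IsSignFunctional ε (signCLM ε hε) := ⟨hε, fun _ => rfl⟩

def eX (n : ℕ) : X1 := lp.single 1 n (1 : ℝ)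

lemma sign_apply_eX {ε : ℕ → ℝ} {f : X1 →L[ℝ] ℝ} (hf : IsSignFunctional ε f) (n : ℕ) :
    f (eX n) = ε n := by
  rw [hf.2]
  rw [tsum_eq_single n]
  · have : ((eX n : X1) : ∀ _ : ℕ, ℝ) n = 1 := lp.single_apply_self 1 n 1
    rw [this, mul_one]
  · intro m hm
    have : ((eX n : X1) : ∀ _ : ℕ, ℝ) m = 0 := lp.single_apply_ne 1 n 1 hm
    rw [this, mul_zero]

def sgn (b : Bool) : ℝ := if b then 1 else -1

def Phi (b : ℕ → Bool) : X1 →L[ℝ] ℝ :=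
  signCLM (fun n => sgn (b n)) (fun n => by
    cases h : b n
    · exact Or.inr (by simp [sgn, h])
    · exact Or.inl (by simp [sgn, h]))

lemma isSignFunctional_Phi (b : ℕ → Bool) : IsSignFunctional (fun n => sgn (b n)) (Phi b) :=
  isSignFunctional_signCLM _ _

lemma Phi_inj : Function.Injective Phi := by
  intro b c h
  funext n
  have hb := sign_apply_eX (isSignFunctional_Phi b) n
  have hc := sign_apply_eX (isSignFunctional_Phi c) n
  rw [h] at hb
  have hsgn : sgn (b n) = sgn (c n) := by rw [← hb, ← hc]
  cases hbn : b n <;> cases hcn : c n <;> rw [hbn, hcn] at hsgn <;>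
    first | rfl | (exfalso; norm_num [sgn] at hsgn)

lemma Phi_surj {f : X1 →L[ℝ] ℝ} {ε : ℕ → ℝ} (hf : IsSignFunctional ε f) :
    ∃ b : ℕ → Bool, Phi b = f := by
  classical
  refine ⟨fun n => if ε n = 1 then true else false, ?_⟩
  ext x
  have hP := (isSignFunctional_Phi (fun n => if ε n = 1 then true else false)).2 x
  rw [hf.2, hP]
  refine tsum_congr fun n => ?_
  rcases hf.1 n with h | h
  · simp [h, sgn]
  · have h1 : ε n ≠ 1 := by rw [h]; norm_num
    simp only [if_neg h1, sgn, h]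
    norm_num

lemma cont_Phi : Continuous fun b : ℕ → Bool => toWeakStar (Phi b) := by
  apply WeakDual.continuous_of_continuous_eval
  intro x
  have hx : ∀ b : ℕ → Bool, (toWeakStar (Phi b)) x = ∑' n, sgn (b n) * (x : ∀ _ : ℕ, ℝ) n :=
    fun b => (isSignFunctional_Phi b).2 x
  simp only [hx]
  refine continuous_tsum (f := fun n (b : ℕ → Bool) => sgn (b n) * (x : ∀ _ : ℕ, ℝ) n)
    (u := fun n => ‖(x : ∀ _ : ℕ, ℝ) n‖) ?_ (summable_norm_X1 x) ?_
  · intro n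
    exact Continuous.comp (g := fun t : Bool => sgn t * (x : ∀ _ : ℕ, ℝ) n)
      continuous_of_discreteTopology (continuous_apply n)
  · intro n b
    cases hb : b n <;> simp [sgn, hb]

lemma countable_of_discrete' {α : Type*} [TopologicalSpace α]
    [SecondCountableTopology α]
    {A : Set α} (h : ∀ a ∈ A, ∃ U, IsOpen U ∧ a ∈ U ∧ ∀ b ∈ A, b ∈ U → b = a) :
    A.Countable := by
  choose U hUo hUa hU using h
  have hV : ∀ a (ha : a ∈ A), ∃ V ∈ TopologicalSpace.countableBasis α, a ∈ V ∧ V ⊆ U a ha :=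
    fun a ha => (TopologicalSpace.isBasis_countableBasis α).exists_subset_of_mem_open
      (hUa a ha) (hUo a ha)
  choose V hVmem hVa hVU using hV
  have hBc : Countable (TopologicalSpace.countableBasis α) :=
    (TopologicalSpace.countable_countableBasis α).to_subtype
  have hinj : Function.Injective (fun a : A => (⟨V a.1 a.2, hVmem a.1 a.2⟩ :
      TopologicalSpace.countableBasis α)) := by
    rintro ⟨a, ha⟩ ⟨b, hb⟩ hab
    simp only [Subtype.mk.injEq] at hab
    have : a ∈ U b hb := hVU b hb (hab ▸ hVa a ha)
    exact Subtype.ext (hU b hb a ha this)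
  exact Set.countable_coe_iff.mp hinj.countable

/-- The set `S = {f_ε : ε ∈ {−1,1}^ℕ}` of sign functionals on `ℓ₁` is not
weak*-σ-discrete. -/
theorem signFunctionals_not_weakStarSigmaDiscrete :
    ¬ IsWeakStarSigmaDiscrete
        {f : (lp (fun _ : ℕ => ℝ) 1) →L[ℝ] ℝ | ∃ ε : ℕ → ℝ, IsSignFunctional ε f} := by
  rintro ⟨T, hST, hdisc⟩
  have hTc : ∀ n, (T n).Countable := by
    intro n
    have hA : (Phi ⁻¹' T n).Countable := by
      apply countable_of_discrete'
      intro b hb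
      obtain ⟨U, hUo, hfU, hUsep⟩ := hdisc n (Phi b) hb
      refine ⟨(fun c => toWeakStar (Phi c)) ⁻¹' U, hUo.preimage cont_Phi, hfU, ?_⟩
      intro c hc hcU
      exact Phi_inj (hUsep (Phi c) hc hcU)
    have hsub : T n ⊆ Phi '' (Phi ⁻¹' T n) := by
      intro f hf
      have hfS : f ∈ {f : (lp (fun _ : ℕ => ℝ) 1) →L[ℝ] ℝ | ∃ ε : ℕ → ℝ, IsSignFunctional ε f} :=
        hST ▸ Set.mem_iUnion.2 ⟨n, hf⟩
      obtain ⟨ε, hε⟩ := hfS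
      obtain ⟨b, hb⟩ := Phi_surj hε
      exact ⟨b, by rw [Set.mem_preimage, hb]; exact hf, hb⟩
    exact Set.Countable.mono hsub (hA.image Phi)
  have hSc : ({f : (lp (fun _ : ℕ => ℝ) 1) →L[ℝ] ℝ | ∃ ε : ℕ → ℝ, IsSignFunctional ε f}).Countable := by
    rw [hST]; exact Set.countable_iUnion hTc
  have hR : (Set.range Phi).Countable := by
    refine hSc.mono ?_
    rintro _ ⟨b, rfl⟩
    exact ⟨_, isSignFunctional_Phi b⟩
  have hCb : Countable (ℕ → Bool) := by
    have := hR.to_subtype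
    exact Function.Injective.countable
      (f := fun b : ℕ → Bool => (⟨Phi b, ⟨b, rfl⟩⟩ : Set.range Phi))
      (fun b c h => Phi_inj (congrArg Subtype.val h))
  classical
  have hSet : Function.Injective
      (fun s : Set ℕ => (fun n => if n ∈ s then true else false : ℕ → Bool)) := by
    intro s t h
    ext n
    have := congrFun h n
    by_cases hs : n ∈ s <;> by_cases ht : n ∈ t <;> simp [hs, ht] at this ⊢ <;> tauto
  have : Countable (Set ℕ) := hSet.countable
  obtain ⟨g, hg⟩ := Countable.exists_injective_nat (Set ℕ)
  exact Function.cantor_injective g hg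

end
end

section
/- Every boundary B for ℓ₁ contains every sign functional: for each ε ∈ {−1,1}^ℕ, the functional f_ε given by f_ε(x) = Σ_n ε_n x_n belongs to B. -/
open scoped ENNReal

lemma lp_apply_eq_tsum (g : (lp (fun _ : ℕ => ℝ) 1) →L[ℝ] ℝ) (y : lp (fun _ : ℕ => ℝ) 1) :
    HasSum (fun n => (y : ∀ _ : ℕ, ℝ) n * g (lp.single 1 n 1)) (g y) := by
  have h : HasSum (fun n : ℕ => lp.single (E := fun _ : ℕ => ℝ) 1 n ((y : ∀ _ : ℕ, ℝ) n)) y :=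
    lp.hasSum_single (by norm_num) y
  have h2 := h.mapL g
  have key : ∀ n : ℕ, g (lp.single (E := fun _ : ℕ => ℝ) 1 n ((y : ∀ _ : ℕ, ℝ) n)) =
      (y : ∀ _ : ℕ, ℝ) n * g (lp.single 1 n 1) := by
    intro n
    have h3 : lp.single (E := fun _ : ℕ => ℝ) (1 : ℝ≥0∞) n ((y : ∀ _ : ℕ, ℝ) n) =
        (y : ∀ _ : ℕ, ℝ) n • lp.single (E := fun _ : ℕ => ℝ) 1 n (1 : ℝ) := by
      rw [← lp.single_smul, smul_eq_mul, mul_one]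
    rw [h3, map_smul, smul_eq_mul]
  simp only [key] at h2
  exact h2

/-- Every boundary for `ℓ₁` contains every sign functional `f_ε`,
`ε ∈ {−1,1}^ℕ`. -/
theorem signFunctional_mem_boundary
    (B : Set ((lp (fun _ : ℕ => ℝ) 1) →L[ℝ] ℝ))
    (hB : IsBoundary (lp (fun _ : ℕ => ℝ) 1) B)
    (ε : ℕ → ℝ) (f : (lp (fun _ : ℕ => ℝ) 1) →L[ℝ] ℝ)
    (hf : IsSignFunctional ε f) :
    f ∈ B := by
  obtain ⟨hε, hfval⟩ := hf
  have hε2 : ∀ n, ε n * ε n = 1 := by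
    intro n; rcases hε n with h | h <;> simp [h]
  have hεabs : ∀ n, |ε n| = 1 := by
    intro n; rcases hε n with h | h <;> simp [h]
  set x' : ℕ → ℝ := fun n => ε n * (2 : ℝ)⁻¹ ^ (n + 1) with hx'def
  have habs : ∀ n, |x' n| = (2 : ℝ)⁻¹ ^ (n + 1) := by
    intro n
    rw [abs_mul, hεabs n, one_mul, abs_pow, abs_of_nonneg (by norm_num : (0:ℝ) ≤ 2⁻¹)]
  have hxne : ∀ n, x' n ≠ 0 := by
    intro n h
    have := habs n
    rw [h, abs_zero] at this
    exact (pow_ne_zero _ (by norm_num : (2:ℝ)⁻¹ ≠ 0)) this.symm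
  have hsum : Summable fun n => ‖x' n‖ ^ (1 : ℝ≥0∞).toReal := by
    simp only [ENNReal.toReal_one, Real.rpow_one, Real.norm_eq_abs]
    simp only [habs]
    exact (summable_geometric_of_lt_one (by norm_num) (by norm_num : (2:ℝ)⁻¹ < 1)).mul_left ((2:ℝ)⁻¹)
      |>.congr (fun n => by rw [pow_succ]; ring)
  have hmem : Memℓp x' 1 := memℓp_gen hsum
  set x : lp (fun _ : ℕ => ℝ) 1 := ⟨x', hmem⟩ with hxdef
  have hxcoe : ∀ n, (x : ∀ _ : ℕ, ℝ) n = x' n := fun n => rfl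
  have hnorm : HasSum (fun n => |x' n|) ‖x‖ := by
    have := lp.hasSum_norm (by norm_num : 0 < (1 : ℝ≥0∞).toReal) x
    simpa [Real.norm_eq_abs] using this
  obtain ⟨g, hgB, hgx⟩ := hB.2 x
  have hg1 : ‖g‖ = 1 := hB.1 g hgB
  set c : ℕ → ℝ := fun n => g (lp.single 1 n 1) with hcdef
  have hcle : ∀ n, |c n| ≤ 1 := by
    intro n
    have h1 : ‖lp.single (E := fun _ : ℕ => ℝ) (1 : ℝ≥0∞) n (1 : ℝ)‖ = 1 := by
      have := lp.norm_single (E := fun _ : ℕ => ℝ) (p := 1) (by norm_num) n (1 : ℝ)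
      simpa using this
    calc |c n| ≤ ‖g‖ * ‖lp.single (E := fun _ : ℕ => ℝ) (1 : ℝ≥0∞) n (1 : ℝ)‖ := g.le_opNorm _
    _ = 1 := by rw [hg1, h1, one_mul]
  have hgsum : HasSum (fun n => x' n * c n) (g x) := lp_apply_eq_tsum g x
  have hdiff : HasSum (fun n => |x' n| - x' n * c n) 0 := by
    have := hnorm.sub hgsum
    rwa [hgx, sub_self] at this
  have hnn : ∀ n, 0 ≤ |x' n| - x' n * c n := by
    intro n
    have : x' n * c n ≤ |x' n * c n| := le_abs_self _
    have h2 : |x' n * c n| ≤ |x' n| := by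
      rw [abs_mul]
      calc |x' n| * |c n| ≤ |x' n| * 1 := by
            exact mul_le_mul_of_nonneg_left (hcle n) (abs_nonneg _)
      _ = |x' n| := mul_one _
    linarith
  have hzero : ∀ n, |x' n| - x' n * c n = 0 := by
    have := (hasSum_zero_iff_of_nonneg hnn).mp hdiff
    intro n; exact congrFun this n
  have hc : ∀ n, c n = ε n := by
    intro n
    have h1 : x' n * c n = |x' n| := by linarith [hzero n]
    have h2 : x' n * ε n = |x' n| := by
      rw [habs n, hx'def]
      calc ε n * (2:ℝ)⁻¹ ^ (n+1) * ε n = (ε n * ε n) * (2:ℝ)⁻¹ ^ (n+1) := by ring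
      _ = (2:ℝ)⁻¹ ^ (n+1) := by rw [hε2 n, one_mul]
    exact mul_left_cancel₀ (hxne n) (h1.trans h2.symm)
  have hgf : g = f := by
    ext y
    have h1 : HasSum (fun n => (y : ∀ _ : ℕ, ℝ) n * c n) (g y) := lp_apply_eq_tsum g y
    have h2 : g y = ∑' n, ε n * (y : ∀ _ : ℕ, ℝ) n := by
      rw [← h1.tsum_eq]
      exact tsum_congr fun n => by rw [hc n, mul_comm]
    rw [h2, hfval y]
  rwa [← hgf]
end

section
/- Let X be a real Banach space and let S be a subset of the unit sphere of X* such that every f ∈ S is a weak*-strongly exposed point: there exists p_f ∈ X with ‖p_f‖ = 1, f(p_f) = 1, and whenever (g_n) is a sequence in the closed unit ball of X* with g_n(p_f) → 1 then ‖g_n − f‖ → 0. If S is discrete in the norm topology of X*, then S is discrete in the weak* topology: every f ∈ S has a weak*-open neighborhood U with U ∩ S = {f}. -/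
open scoped ENNReal

/-- If every element of a subset `S` of the dual unit sphere is a
weak*-strongly exposed point and `S` is discrete in the norm topology, then `S` is discrete
in the weak* topology. -/
theorem normDiscrete_weakStarStronglyExposed_weakStarDiscrete
    (X : Type) [NormedAddCommGroup X] [NormedSpace ℝ X]
    (S : Set (X →L[ℝ] ℝ)) (hSsphere : ∀ f ∈ S, ‖f‖ = 1)
    (hexp : ∀ f ∈ S, ∃ p : X, ‖p‖ = 1 ∧ f p = 1 ∧
      ∀ g : ℕ → (X →L[ℝ] ℝ), (∀ n, ‖g n‖ ≤ 1) →
        Filter.Tendsto (fun n => g n p) Filter.atTop (nhds 1) →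
        Filter.Tendsto (fun n => ‖g n - f‖) Filter.atTop (nhds 0))
    (hS : IsNormDiscrete S) :
    IsWeakStarDiscrete S := by
  intro f hf
  obtain ⟨p, hp, hfp, hexp'⟩ := hexp f hf
  obtain ⟨ε, hε, hdisc⟩ := hS f hf
  by_contra hcon
  push_neg at hcon
  have key : ∀ n : ℕ, ∃ g, g ∈ S ∧ g ≠ f ∧ 1 - 1/(n+1 : ℝ) < g p := by
    intro n
    have hopen : IsOpen {φ : WeakDual ℝ X | 1 - 1/(n+1 : ℝ) < φ p} :=
      isOpen_lt continuous_const (WeakDual.eval_continuous p)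
    have hmem : toWeakStar f ∈ {φ : WeakDual ℝ X | 1 - 1/(n+1 : ℝ) < φ p} := by
      show (1 : ℝ) - 1/(n+1 : ℝ) < f p
      rw [hfp]
      have : (0:ℝ) < 1/(n+1 : ℝ) := by positivity
      linarith
    obtain ⟨g, hgS, hgU, hgne⟩ := hcon _ hopen hmem
    exact ⟨g, hgS, hgne, hgU⟩
  choose g hgS hgne hgp using key
  have hub : ∀ n, g n p ≤ 1 := by
    intro n
    calc g n p ≤ ‖g n p‖ := le_abs_self _
      _ ≤ ‖g n‖ * ‖p‖ := (g n).le_opNorm p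
      _ = 1 := by rw [hSsphere _ (hgS n), hp, one_mul]
  have hlim : Filter.Tendsto (fun n => g n p) Filter.atTop (nhds 1) := by
    have hlo : Filter.Tendsto (fun n : ℕ => 1 - 1/(n+1 : ℝ)) Filter.atTop (nhds 1) := by
      have := tendsto_one_div_add_atTop_nhds_zero_nat (𝕜 := ℝ)
      have h := (tendsto_const_nhds (x := (1:ℝ)) (f := Filter.atTop (α := ℕ))).sub this
      simpa using h
    exact tendsto_of_tendsto_of_tendsto_of_le_of_le hlo tendsto_const_nhds
      (fun n => le_of_lt (hgp n)) hub
  have hnorm := hexp' g (fun n => le_of_eq (hSsphere _ (hgS n))) hlim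
  obtain ⟨n, hn⟩ := (hnorm.eventually (gt_mem_nhds hε)).exists
  exact hgne n (hdisc _ (hgS n) hn)
end

section
/- Every twisted sum of c₀ (= c₀(ℕ)) and a separable isomorphically polyhedral Banach space X is isomorphically polyhedral. -/
open scoped ENNReal

open Filter Topology

local notation "c₀" => ZeroAtInftyContinuousMap ℕ ℝ



lemma c0_abs_le (f : c₀) (n : ℕ) : |f n| ≤ ‖f‖ := by
  rw [← ZeroAtInftyContinuousMap.norm_toBCF_eq_norm]
  exact (f.toBCF.norm_coe_le_norm n)

lemma c0_norm_le {f : c₀} {C : ℝ} (h0 : 0 ≤ C) (h : ∀ n, |f n| ≤ C) : ‖f‖ ≤ C := by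
  rw [← ZeroAtInftyContinuousMap.norm_toBCF_eq_norm]
  exact BoundedContinuousFunction.norm_le h0 |>.2 h

lemma c0_tendsto (f : c₀) : Tendsto (fun n => f n) atTop (𝓝 0) := by
  have := zero_at_infty f
  rwa [cocompact_eq_atTop] at this


-- uniform tail bound on a fin(dim) subspace
lemma c0_tail_bound (S : Submodule ℝ c₀) (hS : FiniteDimensional ℝ S) :
    ∃ N : ℕ, ∀ x : S, ∀ n ≥ N, |(x : c₀) n| ≤ ‖x‖ / 2 := by
  haveI := hS
  have hcomp : IsCompact (Metric.sphere (0 : S) 1) := isCompact_sphere 0 1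
  have hcov : Metric.sphere (0 : S) 1 ⊆
      ⋃ x ∈ Metric.sphere (0 : S) 1, Metric.ball x (1/4 : ℝ) := by
    intro x hx
    exact Set.mem_biUnion hx (by simp [Metric.mem_ball])
  obtain ⟨t, hts, htf, hcover⟩ := hcomp.elim_finite_subcover_image
    (fun x _ => Metric.isOpen_ball) hcov
  have hNex : ∀ x : S, ∃ N : ℕ, ∀ n ≥ N, |(x : c₀) n| ≤ 1/4 := by
    intro x
    have := (c0_tendsto (x : c₀)).eventually
      (eventually_abs_sub_lt 0 (by norm_num : (0:ℝ) < 1/4))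
    rw [eventually_atTop] at this
    obtain ⟨N, hN⟩ := this
    exact ⟨N, fun n hn => by simpa using (hN n hn).le⟩
  choose Nf hNf using hNex
  haveI : Fintype t := htf.fintype
  classical
  refine ⟨t.toFinset.sup Nf, ?_⟩
  have unit : ∀ y : S, ‖y‖ = 1 → ∀ n ≥ t.toFinset.sup Nf, |(y : c₀) n| ≤ 1/2 := by
    intro y hy n hn
    have hy' : y ∈ Metric.sphere (0 : S) 1 := Metric.mem_sphere.2 ((dist_zero_right y).trans hy)
    obtain ⟨x, hxt, hyx⟩ := Set.mem_iUnion₂.1 (hcover hy')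
    have hxx : n ≥ Nf x := le_trans (Finset.le_sup (Set.mem_toFinset.2 hxt)) hn
    have h1 : |(x : c₀) n| ≤ 1/4 := hNf x n hxx
    have h2 : |(y : c₀) n - (x : c₀) n| ≤ ‖y - x‖ := by
      have h := c0_abs_le ((y - x : S) : c₀) n
      have he : ((y - x : S) : c₀) n = (y : c₀) n - (x : c₀) n := by simp
      have hn2 : ‖((y - x : S) : c₀)‖ = ‖y - x‖ := rfl
      rw [he, hn2] at h
      exact h
    have h3 : ‖y - x‖ < 1/4 :=
      lt_of_le_of_lt (le_of_eq (dist_eq_norm y x).symm) (Metric.mem_ball.1 hyx)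
    have h4 : |(y : c₀) n| ≤ |(y : c₀) n - (x : c₀) n| + |(x : c₀) n| := by
      have := abs_add_le ((y : c₀) n - (x : c₀) n) ((x : c₀) n)
      simpa using this
    linarith
  intro x n hn
  rcases eq_or_ne x 0 with rfl | hx0
  · simp
  have hxpos : 0 < ‖x‖ :=
    lt_of_le_of_ne (norm_nonneg x) (fun h => hx0 (by simpa using h.symm))
  have hxn : ‖x‖ ≠ 0 := ne_of_gt hxpos
  set y : S := ‖x‖⁻¹ • x with hy
  have hyn : ‖y‖ = 1 := by
    have hco : ((y : c₀)) = (‖x‖⁻¹ : ℝ) • ((x : c₀)) := by rw [hy]; rfl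
    have h1 : ‖(y : c₀)‖ = ‖(‖x‖⁻¹ : ℝ)‖ * ‖(x : c₀)‖ := by rw [hco]; exact norm_smul (‖x‖⁻¹ : ℝ) ((x : c₀))
    have h2 : ‖y‖ = ‖(y : c₀)‖ := rfl
    rw [h2, h1, Real.norm_eq_abs, abs_inv, abs_of_pos hxpos]
    exact inv_mul_cancel₀ hxn
  have hu := unit y hyn n hn
  have hyc : (y : c₀) n = ‖x‖⁻¹ * (x : c₀) n := by
    rw [hy]; simp
  rw [hyc, abs_mul, abs_inv, abs_of_pos hxpos] at hu
  have h5 : ‖x‖ * (‖x‖⁻¹ * |(x : c₀) n|) ≤ ‖x‖ * (1/2) :=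
    mul_le_mul_of_nonneg_left hu (norm_nonneg x)
  rw [← mul_assoc, mul_inv_cancel₀ hxn, one_mul] at h5
  linarith

theorem isPolyhedral_c0 : IsPolyhedral c₀ := by
  intro S hS
  obtain ⟨N, hN⟩ := c0_tail_bound S hS
  refine ⟨N, { toFun := fun s => fun i : Fin N => (s : c₀) i,
               map_add' := by intro a b; ext i; simp,
               map_smul' := by intro m a; ext i; simp }, ?_⟩
  intro s
  apply le_antisymm
  · apply pi_norm_le_iff_of_nonneg (norm_nonneg _) |>.2
    intro i
    calc ‖(s : c₀) (i : ℕ)‖ = |(s : c₀) (i : ℕ)| := rfl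
    _ ≤ ‖(s : c₀)‖ := c0_abs_le _ _
    _ = ‖s‖ := rfl
  · -- ‖s‖ ≤ sup over first N coords
    set v : Fin N → ℝ := fun i => (s : c₀) i with hv
    have hb : ∀ n, |(s : c₀) n| ≤ max ‖v‖ (‖s‖/2) := by
      intro n
      rcases lt_or_ge n N with h | h
      · refine le_max_of_le_left ?_
        have := norm_le_pi_norm v ⟨n, h⟩
        simpa [hv] using this
      · exact le_max_of_le_right (hN s n h)
    have : ‖(s : c₀)‖ ≤ max ‖v‖ (‖s‖/2) :=
      c0_norm_le (le_max_of_le_right (by positivity)) hb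
    have hs : ‖s‖ ≤ max ‖v‖ (‖s‖/2) := this
    rcases le_max_iff.1 hs with h | h
    · exact h
    · have : ‖s‖ ≤ 0 := by linarith
      have : ‖s‖ = 0 := le_antisymm this (norm_nonneg _)
      rw [this]; positivity


lemma norm_fin_append {m n : ℕ} (u : Fin m → ℝ) (v : Fin n → ℝ) :
    ‖Fin.append u v‖ = max ‖u‖ ‖v‖ := by
  apply le_antisymm
  · apply pi_norm_le_iff_of_nonneg (le_max_of_le_left (norm_nonneg u)) |>.2
    intro i
    refine Fin.addCases (fun j => ?_) (fun j => ?_) i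
    · rw [Fin.append_left]
      exact le_max_of_le_left (norm_le_pi_norm u j)
    · rw [Fin.append_right]
      exact le_max_of_le_right (norm_le_pi_norm v j)
  · apply max_le
    · apply pi_norm_le_iff_of_nonneg (norm_nonneg _) |>.2
      intro j
      have : u j = Fin.append u v (Fin.castAdd n j) := (Fin.append_left u v j).symm
      rw [this]
      exact norm_le_pi_norm _ _
    · apply pi_norm_le_iff_of_nonneg (norm_nonneg _) |>.2
      intro j
      have : v j = Fin.append u v (Fin.natAdd m j) := (Fin.append_right u v j).symm
      rw [this]
      exact norm_le_pi_norm _ _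

lemma isPolyhedral_prod {P₁ : Type*} {P₂ : Type*} [NormedAddCommGroup P₁] [NormedSpace ℝ P₁]
    [NormedAddCommGroup P₂] [NormedSpace ℝ P₂]
    (h1 : IsPolyhedral P₁) (h2 : IsPolyhedral P₂) : IsPolyhedral (P₁ × P₂) := by
  intro S hS
  haveI := hS
  set f1 : (P₁ × P₂) →ₗ[ℝ] P₁ := LinearMap.fst ℝ P₁ P₂ with hf1
  set f2 : (P₁ × P₂) →ₗ[ℝ] P₂ := LinearMap.snd ℝ P₁ P₂ with hf2
  haveI i1 : FiniteDimensional ℝ (S.map f1) := Module.Finite.map S f1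
  haveI i2 : FiniteDimensional ℝ (S.map f2) := Module.Finite.map S f2
  obtain ⟨n₁, T₁, hT₁⟩ := h1 (S.map f1) i1
  obtain ⟨n₂, T₂, hT₂⟩ := h2 (S.map f2) i2
  let A : S →ₗ[ℝ] (S.map f1) :=
    LinearMap.codRestrict (S.map f1) (f1.comp S.subtype)
      (fun s => Submodule.mem_map_of_mem s.2)
  let B : S →ₗ[ℝ] (S.map f2) :=
    LinearMap.codRestrict (S.map f2) (f2.comp S.subtype)
      (fun s => Submodule.mem_map_of_mem s.2)
  have Tadd : ∀ a b : S, (Fin.append (T₁ (A (a+b))) (T₂ (B (a+b))))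
      = Fin.append (T₁ (A a)) (T₂ (B a)) + Fin.append (T₁ (A b)) (T₂ (B b)) := by
    intro a b
    funext i
    refine Fin.addCases (fun j => ?_) (fun j => ?_) i <;>
      simp [Fin.append_left, Fin.append_right, map_add]
  have Tsmul : ∀ (m : ℝ) (a : S), (Fin.append (T₁ (A (m • a))) (T₂ (B (m • a))))
      = m • Fin.append (T₁ (A a)) (T₂ (B a)) := by
    intro m a
    funext i
    refine Fin.addCases (fun j => ?_) (fun j => ?_) i <;>
      simp [Fin.append_left, Fin.append_right, map_smul]
  let T : S →ₗ[ℝ] (Fin (n₁ + n₂) → ℝ) :=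
    ⟨⟨fun s => Fin.append (T₁ (A s)) (T₂ (B s)), fun a b => Tadd a b⟩,
      fun m a => Tsmul m a⟩
  refine ⟨n₁ + n₂, T, ?_⟩
  intro s
  have hT : T s = Fin.append (T₁ (A s)) (T₂ (B s)) := rfl
  rw [hT]
  rw [norm_fin_append, hT₁, hT₂]
  have hA : ‖A s‖ = ‖(s : P₁ × P₂).1‖ := rfl
  have hB : ‖B s‖ = ‖(s : P₁ × P₂).2‖ := rfl
  rw [hA, hB]
  have : ‖s‖ = ‖(s : P₁ × P₂)‖ := rfl
  rw [this, Prod.norm_def]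



noncomputable def finSeq (N : ℕ) (v : Fin N → ℚ) : c₀ :=
  ⟨⟨fun n => if h : n < N then ((v ⟨n, h⟩ : ℚ) : ℝ) else 0,
    continuous_of_discreteTopology⟩, by
      rw [cocompact_eq_atTop]
      apply Tendsto.congr' _ tendsto_const_nhds
      filter_upwards [eventually_ge_atTop N] with n hn
      simp [Nat.not_lt.2 hn]⟩

lemma finSeq_apply (N : ℕ) (v : Fin N → ℚ) (n : ℕ) :
    finSeq N v n = if h : n < N then ((v ⟨n, h⟩ : ℚ) : ℝ) else 0 := rfl

instance c0_separable : TopologicalSpace.SeparableSpace c₀ := by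
  refine ⟨⟨Set.range (fun p : (Σ N : ℕ, Fin N → ℚ) => finSeq p.1 p.2), Set.countable_range _, ?_⟩⟩
  rw [Metric.dense_iff]
  intro f r hr
  obtain ⟨N, hN⟩ := (Metric.tendsto_atTop.1 (c0_tendsto f)) (r/3) (by linarith)
  have hq : ∀ i : Fin N, ∃ q : ℚ, |f (i : ℕ) - q| < r/3 := fun i =>
    exists_rat_near (f (i : ℕ)) (by linarith)
  choose v hv using hq
  refine ⟨finSeq N v, Metric.mem_ball.2 ?_, Set.mem_range_self (⟨N, v⟩ : Σ N : ℕ, Fin N → ℚ)⟩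
  have : ‖finSeq N v - f‖ ≤ 2*r/3 := by
    apply c0_norm_le (by linarith)
    intro n
    have happ : (finSeq N v - f) n = finSeq N v n - f n := by
      simp
    rw [happ, finSeq_apply]
    by_cases h : n < N
    · rw [dif_pos h]
      have := hv ⟨n, h⟩
      rw [abs_sub_comm] at this
      calc |(v ⟨n,h⟩ : ℝ) - f n| = |f n - (v ⟨n,h⟩ : ℝ)| := abs_sub_comm _ _
      _ ≤ 2*r/3 := by
          have := hv ⟨n, h⟩
          simp only [Fin.val_mk] at this ⊢
          linarith
    · rw [dif_neg h]
      have := hN n (Nat.not_lt.1 h)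
      rw [Real.dist_eq, sub_zero] at this
      calc |0 - f n| = |f n| := by rw [zero_sub, abs_neg]
      _ ≤ 2*r/3 := by linarith
  calc dist (finSeq N v) f = ‖finSeq N v - f‖ := dist_eq_norm _ _
  _ ≤ 2*r/3 := this
  _ < r := by linarith



lemma Z_separable (X : Type) [NormedAddCommGroup X] [NormedSpace ℝ X] [CompleteSpace X]
    [TopologicalSpace.SeparableSpace X]
    (Z : Type) [NormedAddCommGroup Z] [NormedSpace ℝ Z] [CompleteSpace Z]
    [TopologicalSpace.SeparableSpace c₀]
    (j : c₀ →L[ℝ] Z) (q : Z →L[ℝ] X) (hqs : Function.Surjective q)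
    (hker : ∀ z : Z, (∃ y : c₀, j y = z) ↔ q z = 0) :
    TopologicalSpace.SeparableSpace Z := by
  obtain ⟨C, hC, hlift⟩ := q.exists_preimage_norm_le hqs
  obtain ⟨DX, hDXc, hDXd⟩ := TopologicalSpace.exists_countable_dense X
  obtain ⟨Dc, hDcc, hDcd⟩ := TopologicalSpace.exists_countable_dense c₀
  choose L hL hLn using hlift
  refine ⟨⟨(fun p : c₀ × X => j p.1 + L p.2) '' (Dc ×ˢ DX),
    Set.Countable.image (hDcc.prod hDXc) _, ?_⟩⟩
  rw [Metric.dense_iff]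
  intro z r hr
  -- choose d close to q z
  obtain ⟨d, hd, hdd⟩ := Metric.dense_iff.1 hDXd (q z) (r / (3 * (C + 1)))
    (by positivity)
  -- w lifts q z - d with small norm
  set w := L (q z - d) with hw
  have hqw : q w = q z - d := hL _
  have hwn : ‖w‖ ≤ C * ‖q z - d‖ := hLn _
  -- z - w - L d ∈ ker q
  have hker' : q (z - w - L d) = 0 := by
    rw [map_sub, map_sub, hqw, hL]
    abel
  obtain ⟨y₀, hy₀⟩ := (hker _).2 hker'
  -- approximate y₀
  obtain ⟨s, hs, hss⟩ := Metric.dense_iff.1 hDcd y₀ (r / (3 * (‖j‖ + 1)))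
    (by positivity)
  refine ⟨j s + L d, Metric.mem_ball.2 ?_, Set.mem_image_of_mem _ (Set.mk_mem_prod hss hdd)⟩
  have key : z - (j s + L d) = w + (j y₀ - j s) := by
    rw [hy₀]; abel
  have hdz : dist (j s + L d) z = ‖w + (j y₀ - j s)‖ := by
    rw [dist_eq_norm, ← neg_sub z, norm_neg, key]
  rw [hdz]
  have h1 : ‖w‖ < r/3 := by
    have hdist : ‖q z - d‖ < r / (3 * (C + 1)) := by
      have := Metric.mem_ball.1 hd
      rwa [dist_comm, dist_eq_norm] at this
    calc ‖w‖ ≤ C * ‖q z - d‖ := hwn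
    _ ≤ C * (r / (3 * (C + 1))) := by
        apply mul_le_mul_of_nonneg_left hdist.le hC.le
    _ < r/3 := by
        have h1' : C * (r / (3*(C+1))) < (C+1) * (r/(3*(C+1))) :=
          mul_lt_mul_of_pos_right (lt_add_one C) (by positivity)
        have heq : (C+1) * (r/(3*(C+1))) = r/3 := by field_simp
        linarith
  have h2 : ‖j y₀ - j s‖ < r/3 := by
    have hdist : ‖y₀ - s‖ < r / (3 * (‖j‖ + 1)) := by
      have := Metric.mem_ball.1 hs
      rwa [dist_comm, dist_eq_norm] at this
    calc ‖j y₀ - j s‖ = ‖j (y₀ - s)‖ := by rw [map_sub]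
    _ ≤ ‖j‖ * ‖y₀ - s‖ := j.le_opNorm _
    _ ≤ ‖j‖ * (r / (3 * (‖j‖ + 1))) := mul_le_mul_of_nonneg_left hdist.le (norm_nonneg j)
    _ < (‖j‖ + 1) * (r / (3 * (‖j‖+1))) := by
        apply mul_lt_mul_of_pos_right (by linarith) (by positivity)
    _ = r / 3 := by field_simp
  calc ‖w + (j y₀ - j s)‖ ≤ ‖w‖ + ‖j y₀ - j s‖ := norm_add_le _ _
  _ < r/3 + r/3 := by linarith
  _ < r := by linarith


lemma exists_subseq_weakstar_limit {Z : Type} [NormedAddCommGroup Z] [NormedSpace ℝ Z]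
    (zs : ℕ → Z) (hzs : DenseRange zs)
    (G : ℕ → Z →L[ℝ] ℝ) (M : ℝ) (hM : 0 ≤ M) (hGb : ∀ m, ‖G m‖ ≤ M) :
    ∃ (ψ : Z →L[ℝ] ℝ) (φ : ℕ → ℕ), StrictMono φ ∧ ‖ψ‖ ≤ M ∧
      ∀ z : Z, Tendsto (fun m => G (φ m) z) atTop (𝓝 (ψ z)) := by
  classical
  set F : ℕ → (ℕ → ℝ) := fun m k => G m (zs k) with hF
  have hFmem : ∀ m, F m ∈ Set.pi Set.univ (fun k => Set.Icc (-(M*‖zs k‖)) (M*‖zs k‖)) := by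
    intro m k _
    have h1 : |G m (zs k)| ≤ M * ‖zs k‖ := by
      calc |G m (zs k)| = ‖G m (zs k)‖ := rfl
      _ ≤ ‖G m‖ * ‖zs k‖ := (G m).le_opNorm _
      _ ≤ M * ‖zs k‖ := mul_le_mul_of_nonneg_right (hGb m) (norm_nonneg _)
    exact abs_le.1 h1
  have hcomp : IsCompact (Set.pi Set.univ (fun k => Set.Icc (-(M*‖zs k‖)) (M*‖zs k‖))) :=
    isCompact_univ_pi (fun k => isCompact_Icc)
  obtain ⟨a, -, φ, hφ, hconv⟩ := hcomp.tendsto_subseq hFmem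
  have hk : ∀ k, Tendsto (fun m => G (φ m) (zs k)) atTop (𝓝 (a k)) := by
    intro k
    have := tendsto_pi_nhds.1 hconv k
    exact this
  -- Cauchy at every point
  have hcauchy : ∀ z : Z, CauchySeq (fun m => G (φ m) z) := by
    intro z
    rw [Metric.cauchySeq_iff]
    intro ε hε
    obtain ⟨k, hkd⟩ := Metric.denseRange_iff.1 hzs z (ε/(4*(M+1))) (by positivity)
    have hck : CauchySeq (fun m => G (φ m) (zs k)) := (hk k).cauchySeq
    obtain ⟨N, hN⟩ := Metric.cauchySeq_iff.1 hck (ε/2) (by positivity)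
    refine ⟨N, fun p hp q hq => ?_⟩
    have hzk : ‖z - zs k‖ < ε/(4*(M+1)) := by
      have h := hkd
      rwa [dist_eq_norm] at h
    have key : ∀ m, |G (φ m) z - G (φ m) (zs k)| ≤ M * ‖z - zs k‖ := by
      intro m
      have e0 : G (φ m) z - G (φ m) (zs k) = G (φ m) (z - zs k) := by rw [map_sub]
      rw [e0]
      have e1 : |G (φ m) (z - zs k)| ≤ ‖G (φ m)‖ * ‖z - zs k‖ := (G (φ m)).le_opNorm _
      have e2 : ‖G (φ m)‖ * ‖z - zs k‖ ≤ M * ‖z - zs k‖ :=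
        mul_le_mul_of_nonneg_right (hGb _) (norm_nonneg _)
      linarith
    have hMe : M * ‖z - zs k‖ ≤ ε/4 := by
      have e3 : M * ‖z - zs k‖ ≤ M * (ε/(4*(M+1))) :=
        mul_le_mul_of_nonneg_left hzk.le hM
      have e4 : M * (ε/(4*(M+1))) ≤ (M+1) * (ε/(4*(M+1))) :=
        mul_le_mul_of_nonneg_right (by linarith) (by positivity)
      have e5 : (M+1) * (ε/(4*(M+1))) = ε/4 := by field_simp
      linarith
    have hsmall : ∀ m, |G (φ m) z - G (φ m) (zs k)| ≤ ε/4 :=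
      fun m => (key m).trans hMe
    have hd := hN p hp q hq
    rw [Real.dist_eq] at hd ⊢
    have e1 := hsmall p
    have e2 := hsmall q
    have habs : |G (φ p) z - G (φ q) z| ≤
        |G (φ p) z - G (φ p) (zs k)| + |G (φ q) z - G (φ q) (zs k)|
          + |G (φ p) (zs k) - G (φ q) (zs k)| := by
      have hexp : G (φ p) z - G (φ q) z =
          ((G (φ p) z - G (φ p) (zs k)) - (G (φ q) z - G (φ q) (zs k)))
          + (G (φ p) (zs k) - G (φ q) (zs k)) := by ring
      rw [hexp]
      refine (abs_add_le _ _).trans (add_le_add_left ?_ _)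
      exact abs_sub _ _
    linarith
  have hlim : ∀ z : Z, ∃ l : ℝ, Tendsto (fun m => G (φ m) z) atTop (𝓝 l) :=
    fun z => cauchySeq_tendsto_of_complete (hcauchy z)
  choose ℓ hℓ using hlim
  have hadd : ∀ x y : Z, ℓ (x + y) = ℓ x + ℓ y := by
    intro x y
    have h1 : Tendsto (fun m => G (φ m) (x + y)) atTop (𝓝 (ℓ x + ℓ y)) := by
      have := (hℓ x).add (hℓ y)
      simpa [← map_add] using this
    exact tendsto_nhds_unique (hℓ (x+y)) h1
  have hsmul : ∀ (r : ℝ) (x : Z), ℓ (r • x) = r * ℓ x := by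
    intro r x
    have h1 : Tendsto (fun m => G (φ m) (r • x)) atTop (𝓝 (r * ℓ x)) := by
      have := (hℓ x).const_mul r
      simpa [map_smul, smul_eq_mul] using this
    exact tendsto_nhds_unique (hℓ (r • x)) h1
  have hbound : ∀ z : Z, |ℓ z| ≤ M * ‖z‖ := by
    intro z
    have h1 : Tendsto (fun m => |G (φ m) z|) atTop (𝓝 |ℓ z|) := (hℓ z).abs
    apply le_of_tendsto h1
    filter_upwards with m
    calc |G (φ m) z| = ‖G (φ m) z‖ := rfl
    _ ≤ ‖G (φ m)‖ * ‖z‖ := (G (φ m)).le_opNorm _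
    _ ≤ M * ‖z‖ := mul_le_mul_of_nonneg_right (hGb _) (norm_nonneg _)
  set ψ₀ : Z →ₗ[ℝ] ℝ :=
    { toFun := ℓ, map_add' := hadd, map_smul' := by intro r x; simpa using hsmul r x } with hψ₀
  refine ⟨LinearMap.mkContinuous ψ₀ M (fun z => by exact hbound z), φ, hφ,
    LinearMap.mkContinuous_norm_le _ hM _, fun z => ?_⟩
  exact hℓ z


variable {Z : Type} [NormedAddCommGroup Z] [NormedSpace ℝ Z]

lemma tendsto_zero_of_dense (zs : ℕ → Z) (hzs : DenseRange zs) (u : ℕ → Z →L[ℝ] ℝ)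
    (M : ℝ) (hM : 0 ≤ M) (hub : ∀ n, ‖u n‖ ≤ M)
    (h : ∀ k, Tendsto (fun n => u n (zs k)) atTop (𝓝 0)) :
    ∀ z, Tendsto (fun n => u n z) atTop (𝓝 0) := by
  intro z
  rw [Metric.tendsto_atTop]
  intro ε hε
  obtain ⟨k, hkd⟩ := Metric.denseRange_iff.1 hzs z (ε/(2*(M+1))) (by positivity)
  have hzk : ‖z - zs k‖ < ε/(2*(M+1)) := by
    have h' := hkd; rwa [dist_eq_norm] at h'
  obtain ⟨N, hN⟩ := Metric.tendsto_atTop.1 (h k) (ε/4) (by positivity)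
  refine ⟨N, fun n hn => ?_⟩
  have hd := hN n hn
  rw [Real.dist_eq, sub_zero] at hd ⊢
  have key : |u n z - u n (zs k)| ≤ M * ‖z - zs k‖ := by
    have e0 : u n z - u n (zs k) = u n (z - zs k) := by rw [map_sub]
    rw [e0]
    have e1 : |u n (z - zs k)| ≤ ‖u n‖ * ‖z - zs k‖ := (u n).le_opNorm _
    have e2 : ‖u n‖ * ‖z - zs k‖ ≤ M * ‖z - zs k‖ :=
      mul_le_mul_of_nonneg_right (hub _) (norm_nonneg _)
    linarith
  have hMe : M * ‖z - zs k‖ ≤ ε/2 := by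
    have e3 : M * ‖z - zs k‖ ≤ M * (ε/(2*(M+1))) := mul_le_mul_of_nonneg_left hzk.le hM
    have e4 : M * (ε/(2*(M+1))) ≤ (M+1) * (ε/(2*(M+1))) :=
      mul_le_mul_of_nonneg_right (by linarith) (by positivity)
    have e5 : (M+1) * (ε/(2*(M+1))) = ε/2 := by field_simp
    linarith
  have : |u n z| ≤ |u n z - u n (zs k)| + |u n (zs k)| := by
    have := abs_add_le (u n z - u n (zs k)) (u n (zs k))
    simpa using this
  linarith

noncomputable def sigFun (zs : ℕ → Z) (ϕ : Z →L[ℝ] ℝ) : ℝ :=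
  ⨆ k, (2:ℝ)⁻¹^k * min 1 |ϕ (zs k)|

lemma sig_bdd (zs : ℕ → Z) (ϕ : Z →L[ℝ] ℝ) :
    BddAbove (Set.range fun k => (2:ℝ)⁻¹^k * min 1 |ϕ (zs k)|) := by
  refine ⟨1, ?_⟩
  rintro x ⟨k, rfl⟩
  have h1 : (2:ℝ)⁻¹^k ≤ 1 := pow_le_one₀ (by norm_num) (by norm_num)
  have h2 : min 1 |ϕ (zs k)| ≤ 1 := min_le_left _ _
  have h3 : (0:ℝ) ≤ min 1 |ϕ (zs k)| := le_min (by norm_num) (abs_nonneg _)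
  calc (2:ℝ)⁻¹^k * min 1 |ϕ (zs k)| ≤ 1 * 1 :=
    mul_le_mul h1 h2 h3 (by norm_num)
  _ = 1 := by norm_num

lemma sig_nonneg (zs : ℕ → Z) (ϕ : Z →L[ℝ] ℝ) : 0 ≤ sigFun zs ϕ :=
  Real.iSup_nonneg (fun k => by positivity)

lemma term_le_sig (zs : ℕ → Z) (ϕ : Z →L[ℝ] ℝ) (k : ℕ) :
    (2:ℝ)⁻¹^k * min 1 |ϕ (zs k)| ≤ sigFun zs ϕ :=
  le_ciSup (sig_bdd zs ϕ) k

lemma sig_le (zs : ℕ → Z) (ϕ : Z →L[ℝ] ℝ) (b : ℝ)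
    (hb : ∀ k, (2:ℝ)⁻¹^k * min 1 |ϕ (zs k)| ≤ b) : sigFun zs ϕ ≤ b :=
  ciSup_le hb

lemma sig_tendsto_zero (zs : ℕ → Z) (v : ℕ → Z →L[ℝ] ℝ)
    (h : ∀ k, Tendsto (fun m => v m (zs k)) atTop (𝓝 0)) :
    Tendsto (fun m => sigFun zs (v m)) atTop (𝓝 0) := by
  rw [Metric.tendsto_atTop]
  intro ε hε
  obtain ⟨K0, hK0⟩ := exists_pow_lt_of_lt_one (show (0:ℝ) < ε/2 by positivity)
    (show (2:ℝ)⁻¹ < 1 by norm_num)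
  have hev : ∀ᶠ m in atTop, ∀ k ∈ Finset.range K0, |v m (zs k)| < ε/2 := by
    rw [eventually_all_finset]
    intro k _
    have := Metric.tendsto_atTop.1 (h k) (ε/2) (by positivity)
    obtain ⟨N, hN⟩ := this
    rw [eventually_atTop]
    exact ⟨N, fun m hm => by have := hN m hm; rwa [Real.dist_eq, sub_zero] at this⟩
  rw [eventually_atTop] at hev
  obtain ⟨N, hN⟩ := hev
  refine ⟨N, fun m hm => ?_⟩
  rw [Real.dist_eq, sub_zero, abs_of_nonneg (sig_nonneg zs (v m))]
  have hle : sigFun zs (v m) ≤ ε/2 := by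
    apply sig_le
    intro k
    rcases lt_or_ge k K0 with hk | hk
    · have h1 : |v m (zs k)| < ε/2 := hN m hm k (Finset.mem_range.2 hk)
      have h2 : min 1 |v m (zs k)| ≤ |v m (zs k)| := min_le_right _ _
      have h3 : (2:ℝ)⁻¹^k * min 1 |v m (zs k)| ≤ min 1 |v m (zs k)| := by
        apply mul_le_of_le_one_left (le_min (by norm_num) (abs_nonneg _))
        exact pow_le_one₀ (by norm_num) (by norm_num)
      linarith
    · have h1 : (2:ℝ)⁻¹^k * min 1 |v m (zs k)| ≤ (2:ℝ)⁻¹^k := by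
        apply mul_le_of_le_one_right (by positivity)
        exact min_le_left _ _
      have h2 : (2:ℝ)⁻¹^k ≤ (2:ℝ)⁻¹^K0 :=
        pow_le_pow_of_le_one (by norm_num) (by norm_num) hk
      linarith
  linarith

lemma coord_tendsto_of_sig (zs : ℕ → Z) (v : ℕ → Z →L[ℝ] ℝ)
    (hs : Tendsto (fun m => sigFun zs (v m)) atTop (𝓝 0)) (k : ℕ) :
    Tendsto (fun m => v m (zs k)) atTop (𝓝 0) := by
  rw [Metric.tendsto_atTop]
  intro ε hε
  set δ : ℝ := (2:ℝ)⁻¹^k * (min 1 ε / 2) with hδ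
  have hδpos : 0 < δ := by
    have : (0:ℝ) < min 1 ε := lt_min (by norm_num) hε
    positivity
  obtain ⟨N, hN⟩ := Metric.tendsto_atTop.1 hs δ hδpos
  refine ⟨N, fun m hm => ?_⟩
  have hsm := hN m hm
  rw [Real.dist_eq, sub_zero, abs_of_nonneg (sig_nonneg zs (v m))] at hsm
  have h1 : (2:ℝ)⁻¹^k * min 1 |v m (zs k)| ≤ sigFun zs (v m) := term_le_sig zs (v m) k
  have hpow : (0:ℝ) < (2:ℝ)⁻¹^k := by positivity
  have h2 : min 1 |v m (zs k)| < min 1 ε / 2 := by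
    have := lt_of_le_of_lt h1 hsm
    rw [hδ] at this
    exact lt_of_mul_lt_mul_left this hpow.le
  have h3 : min 1 |v m (zs k)| = |v m (zs k)| := by
    apply min_eq_right
    by_contra hcon
    push_neg at hcon
    have : min 1 |v m (zs k)| = 1 := min_eq_left hcon.le
    rw [this] at h2
    have : min 1 ε ≤ 1 := min_le_left _ _
    linarith
  rw [Real.dist_eq, sub_zero]
  rw [h3] at h2
  have : min 1 ε ≤ ε := min_le_right _ _
  linarith



def evalLM (n : ℕ) : (ZeroAtInftyContinuousMap ℕ ℝ) →ₗ[ℝ] ℝ :=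
  { toFun := fun f => f n
    map_add' := by intros; simp
    map_smul' := by intros; simp }

lemma exists_dual_coords {Z : Type} [NormedAddCommGroup Z] [NormedSpace ℝ Z]
    (j : c₀ →L[ℝ] Z) (c : ℝ) (hc : 0 < c) (hjb : ∀ y : c₀, c * ‖y‖ ≤ ‖j y‖) :
    ∃ g : ℕ → Z →L[ℝ] ℝ, (∀ (n : ℕ) (y : c₀), g n (j y) = y n) ∧ ∀ n, ‖g n‖ ≤ c⁻¹ := by
  have hinj : Function.Injective (j : c₀ →ₗ[ℝ] Z) := by
    intro a b hab
    have h0 : j (a - b) = 0 := by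
      have : j a = j b := hab
      rw [map_sub, this, sub_self]
    have h1 := hjb (a - b)
    rw [h0, norm_zero] at h1
    have h2 : ‖a - b‖ ≤ 0 := by nlinarith [norm_nonneg (a - b)]
    have h3 : a - b = 0 := norm_le_zero_iff.1 h2
    exact sub_eq_zero.1 h3
  set Y : Submodule ℝ Z := LinearMap.range (j : c₀ →ₗ[ℝ] Z) with hY
  set e : c₀ ≃ₗ[ℝ] Y := LinearEquiv.ofInjective (j : c₀ →ₗ[ℝ] Z) hinj with he
  have hes : ∀ y : Y, j (e.symm y) = (y : Z) := by
    intro y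
    have h1 : (↑(e (e.symm y)) : Z) = j (e.symm y) := by
      rw [he]; exact LinearEquiv.ofInjective_apply _ _
    rw [e.apply_symm_apply] at h1
    exact h1.symm
  have hnb : ∀ y : Y, ‖e.symm y‖ ≤ c⁻¹ * ‖(y : Z)‖ := by
    intro y
    have h1 := hjb (e.symm y)
    rw [hes y] at h1
    calc ‖e.symm y‖ = c⁻¹ * (c * ‖e.symm y‖) := by field_simp
    _ ≤ c⁻¹ * ‖(y : Z)‖ := mul_le_mul_of_nonneg_left h1 (by positivity)
  have hψb : ∀ (n : ℕ) (y : Y), ‖((evalLM n).comp (e.symm : Y →ₗ[ℝ] c₀)) y‖ ≤ c⁻¹ * ‖y‖ := by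
    intro n y
    have h1 : |(e.symm y : c₀) n| ≤ ‖(e.symm y : c₀)‖ := c0_abs_le _ n
    have h2 := hnb y
    have h3 : ‖y‖ = ‖(y : Z)‖ := rfl
    rw [h3]
    calc ‖((evalLM n).comp (e.symm : Y →ₗ[ℝ] c₀)) y‖ = |(e.symm y : c₀) n| := rfl
    _ ≤ ‖(e.symm y : c₀)‖ := h1
    _ ≤ c⁻¹ * ‖(y : Z)‖ := h2
  set ψ : ℕ → (Y →L[ℝ] ℝ) := fun n =>
    LinearMap.mkContinuous ((evalLM n).comp (e.symm : Y →ₗ[ℝ] c₀)) c⁻¹ (hψb n) with hψ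
  have hext : ∀ n, ∃ g : Z →L[ℝ] ℝ, (∀ x : Y, g x = ψ n x) ∧ ‖g‖ = ‖ψ n‖ :=
    fun n => exists_extension_norm_eq Y (ψ n)
  choose g hg hgn using hext
  refine ⟨g, ?_, ?_⟩
  · intro n y
    have hmem : j y ∈ Y := by
      rw [hY]
      exact ⟨y, rfl⟩
    have h1 : g n ((⟨j y, hmem⟩ : Y) : Z) = ψ n ⟨j y, hmem⟩ := hg n ⟨j y, hmem⟩
    have h2 : e y = ⟨j y, hmem⟩ := by
      apply Subtype.ext
      rw [he]
      exact LinearEquiv.ofInjective_apply _ _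
    have h3 : e.symm ⟨j y, hmem⟩ = y := by rw [← h2, e.symm_apply_apply]
    have h4 : ψ n ⟨j y, hmem⟩ = (e.symm (⟨j y, hmem⟩ : Y) : c₀) n := rfl
    rw [h4, h3] at h1
    exact h1
  · intro n
    rw [hgn n]
    exact LinearMap.mkContinuous_norm_le _ (by positivity) _
lemma exists_weakstar_null_coords {Z : Type} [NormedAddCommGroup Z] [NormedSpace ℝ Z]
    [TopologicalSpace.SeparableSpace Z]
    (j : c₀ →L[ℝ] Z) (c : ℝ) (hc : 0 < c) (hjb : ∀ y : c₀, c * ‖y‖ ≤ ‖j y‖) :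
    ∃ u : ℕ → Z →L[ℝ] ℝ, (∀ (n : ℕ) (y : c₀), u n (j y) = y n) ∧
      (∀ n, ‖u n‖ ≤ c⁻¹ + c⁻¹) ∧
      ∀ z : Z, Tendsto (fun n => u n z) atTop (𝓝 0) := by
  obtain ⟨g, hgj, hgb⟩ := exists_dual_coords j c hc hjb
  have hne : Nonempty Z := ⟨0⟩
  set zs : ℕ → Z := TopologicalSpace.denseSeq Z with hzsdef
  have hzs : DenseRange zs := TopologicalSpace.denseRange_denseSeq Z
  set K : Set (Z →L[ℝ] ℝ) := {h | ‖h‖ ≤ c⁻¹ ∧ ∀ y : c₀, h (j y) = 0} with hK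
  have h0K : (0 : Z →L[ℝ] ℝ) ∈ K := by
    constructor
    · rw [norm_zero]; positivity
    · intro y; rfl
  set A : ℕ → Set ℝ := fun n => (fun h => sigFun zs (g n - h)) '' K with hA
  have hAne : ∀ n, (A n).Nonempty := fun n => ⟨_, ⟨0, h0K, rfl⟩⟩
  have hAbdd : ∀ n, BddBelow (A n) := by
    intro n
    refine ⟨0, ?_⟩
    rintro x ⟨h, hh, rfl⟩
    exact sig_nonneg zs _
  set α : ℕ → ℝ := fun n => sInf (A n) with hα
  have hα0 : ∀ n, 0 ≤ α n := by
    intro n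
    apply le_csInf (hAne n)
    rintro x ⟨h, hh, rfl⟩
    exact sig_nonneg _ _
  have hch : ∀ n, ∃ h ∈ K, sigFun zs (g n - h) < α n + 1/(n+1) := by
    intro n
    obtain ⟨a, haA, ha⟩ := Real.lt_sInf_add_pos (hAne n)
      (show (0:ℝ) < 1/(n+1) by positivity)
    obtain ⟨h, hh, rfl⟩ := haA
    exact ⟨h, hh, ha⟩
  choose h hhK hhσ using hch
  have hαt : Tendsto α atTop (𝓝 0) := by
    by_contra hcon
    rw [Metric.tendsto_atTop] at hcon
    push_neg at hcon
    obtain ⟨ε, hε, hfreq⟩ := hcon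
    have hfreq' : ∃ᶠ n in atTop, ε ≤ α n := by
      rw [frequently_atTop]
      intro N
      obtain ⟨n, hn, hd⟩ := hfreq N
      refine ⟨n, hn, ?_⟩
      rw [Real.dist_eq, sub_zero, abs_of_nonneg (hα0 n)] at hd
      linarith
    obtain ⟨φ, hφ, hφε⟩ := Filter.extraction_of_frequently_atTop hfreq'
    obtain ⟨ψ, φ₂, hφ₂, hψn, hψlim⟩ := exists_subseq_weakstar_limit zs hzs
      (fun m => g (φ m)) c⁻¹ (by positivity) (fun m => hgb _)
    have hψK : ψ ∈ K := by
      refine ⟨hψn, fun y => ?_⟩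
      have h1 : Tendsto (fun m => g (φ (φ₂ m)) (j y)) atTop (𝓝 (ψ (j y))) := hψlim (j y)
      have h2 : Tendsto (fun m => g (φ (φ₂ m)) (j y)) atTop (𝓝 0) := by
        have h3 : (fun m => g (φ (φ₂ m)) (j y)) = fun m => y (φ (φ₂ m)) :=
          funext (fun m => hgj _ y)
        rw [h3]
        exact (c0_tendsto y).comp ((hφ.comp hφ₂).tendsto_atTop)
      exact tendsto_nhds_unique h1 h2
    have hle : ∀ m, α (φ (φ₂ m)) ≤ sigFun zs (g (φ (φ₂ m)) - ψ) := fun m =>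
      csInf_le (hAbdd _) ⟨ψ, hψK, rfl⟩
    have hto : Tendsto (fun m => sigFun zs (g (φ (φ₂ m)) - ψ)) atTop (𝓝 0) := by
      apply sig_tendsto_zero
      intro k
      have h1 : Tendsto (fun m => g (φ (φ₂ m)) (zs k)) atTop (𝓝 (ψ (zs k))) := hψlim (zs k)
      have h2 := h1.sub (tendsto_const_nhds (x := ψ (zs k)))
      rw [sub_self] at h2
      apply h2.congr
      intro m
      simp
    obtain ⟨N, hN⟩ := (Metric.tendsto_atTop.1 hto) (ε/2) (by positivity)
    have hd := hN N (le_refl N)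
    have h4 := hφε (φ₂ N)
    have h5 := hle N
    rw [Real.dist_eq, sub_zero, abs_of_nonneg (sig_nonneg _ _)] at hd
    linarith
  refine ⟨fun n => g n - h n, ?_, ?_, ?_⟩
  · intro n y
    have h1 : (g n - h n) (j y) = g n (j y) - h n (j y) := rfl
    rw [h1, hgj n y, (hhK n).2 y, sub_zero]
  · intro n
    calc ‖g n - h n‖ ≤ ‖g n‖ + ‖h n‖ := norm_sub_le _ _
    _ ≤ c⁻¹ + c⁻¹ := add_le_add (hgb n) (hhK n).1
  · have hub : Tendsto (fun n => α n + 1/((n:ℝ)+1)) atTop (𝓝 0) := by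
      have h2 : Tendsto (fun n : ℕ => 1/((n:ℝ)+1)) atTop (𝓝 0) :=
        tendsto_one_div_add_atTop_nhds_zero_nat
      have := hαt.add h2
      simpa using this
    have hσ0 : Tendsto (fun n => sigFun zs (g n - h n)) atTop (𝓝 0) :=
      squeeze_zero (fun n => sig_nonneg _ _) (fun n => (hhσ n).le) hub
    have hcoord := fun k => coord_tendsto_of_sig zs (fun n => g n - h n) hσ0 k
    apply tendsto_zero_of_dense zs hzs _ (c⁻¹ + c⁻¹) (by positivity) ?_ hcoord
    intro n
    calc ‖g n - h n‖ ≤ ‖g n‖ + ‖h n‖ := norm_sub_le _ _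
    _ ≤ c⁻¹ + c⁻¹ := add_le_add (hgb n) (hhK n).1
lemma twisted_splitting (X : Type) [NormedAddCommGroup X] [NormedSpace ℝ X] [CompleteSpace X]
    (Z : Type) [NormedAddCommGroup Z] [NormedSpace ℝ Z] [CompleteSpace Z]
    [TopologicalSpace.SeparableSpace Z]
    (j : c₀ →L[ℝ] Z) (q : Z →L[ℝ] X) (c : ℝ) (hc : 0 < c)
    (hjb : ∀ y : c₀, c * ‖y‖ ≤ ‖j y‖) (hqs : Function.Surjective q)
    (hker : ∀ z : Z, (∃ y : c₀, j y = z) ↔ q z = 0) :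
    Nonempty (Z ≃L[ℝ] ((ZeroAtInftyContinuousMap ℕ ℝ) × X)) := by
  obtain ⟨u, huj, hub, hu0⟩ := exists_weakstar_null_coords j c hc hjb
  set M : ℝ := c⁻¹ + c⁻¹ with hM
  have hM0 : 0 ≤ M := by positivity
  -- define Pc : Z →L[ℝ] c₀
  set Pc0 : Z → c₀ := fun z =>
    ⟨⟨fun n => u n z, continuous_of_discreteTopology⟩, by
      rw [cocompact_eq_atTop]; exact hu0 z⟩ with hPc0
  have hPc0app : ∀ (z : Z) (n : ℕ), Pc0 z n = u n z := fun z n => rfl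
  have hadd : ∀ a b : Z, Pc0 (a + b) = Pc0 a + Pc0 b := by
    intro a b
    ext n
    simp [hPc0app, map_add]
  have hsmul : ∀ (r : ℝ) (a : Z), Pc0 (r • a) = r • Pc0 a := by
    intro r a
    ext n
    simp [hPc0app, map_smul]
  set Pcl : Z →ₗ[ℝ] c₀ :=
    { toFun := Pc0, map_add' := hadd, map_smul' := by intro r a; simpa using hsmul r a }
    with hPcl
  have hbound : ∀ z : Z, ‖Pcl z‖ ≤ M * ‖z‖ := by
    intro z
    apply c0_norm_le (by positivity)
    intro n
    have h1 : |u n z| ≤ ‖u n‖ * ‖z‖ := (u n).le_opNorm z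
    have h2 : ‖u n‖ * ‖z‖ ≤ M * ‖z‖ := mul_le_mul_of_nonneg_right (hub n) (norm_nonneg _)
    have h3 : (Pcl z) n = u n z := rfl
    rw [h3]
    linarith
  set Pc : Z →L[ℝ] c₀ := LinearMap.mkContinuous Pcl M hbound with hPc
  have hPcapp : ∀ (z : Z) (n : ℕ), (Pc z) n = u n z := fun z n => rfl
  have hPcj : ∀ y : c₀, Pc (j y) = y := by
    intro y
    ext n
    rw [hPcapp]
    exact huj n y
  set Φ : Z →L[ℝ] ((ZeroAtInftyContinuousMap ℕ ℝ) × X) := Pc.prod q with hΦ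
  have hΦapp : ∀ z : Z, Φ z = (Pc z, q z) := fun z => rfl
  have hkerΦ : LinearMap.ker (Φ : Z →ₗ[ℝ] ((ZeroAtInftyContinuousMap ℕ ℝ) × X)) = ⊥ := by
    rw [LinearMap.ker_eq_bot']
    intro m hm
    have hm' : Φ m = 0 := hm
    rw [hΦapp] at hm'
    have h1 : Pc m = 0 := congrArg Prod.fst hm'
    have h2 : q m = 0 := congrArg Prod.snd hm'
    obtain ⟨y, hy⟩ := (hker m).2 h2
    have h3 : Pc (j y) = y := hPcj y
    rw [hy, h1] at h3
    rw [← hy, ← h3, map_zero]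
  have hrangeΦ : LinearMap.range (Φ : Z →ₗ[ℝ] ((ZeroAtInftyContinuousMap ℕ ℝ) × X)) = ⊤ := by
    rw [LinearMap.range_eq_top]
    rintro ⟨a, x⟩
    obtain ⟨z₀, hz₀⟩ := hqs x
    refine ⟨j (a - Pc z₀) + z₀, ?_⟩
    have hq0 : q (j (a - Pc z₀)) = 0 := (hker _).1 ⟨_, rfl⟩
    have hqz : q (j (a - Pc z₀) + z₀) = x := by
      rw [map_add, hq0, zero_add, hz₀]
    have hpz : Pc (j (a - Pc z₀) + z₀) = a := by
      rw [map_add, hPcj, sub_add_cancel]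
    show Φ (j (a - Pc z₀) + z₀) = (a, x)
    rw [hΦapp, hqz, hpz]
  exact ⟨ContinuousLinearEquiv.ofBijective Φ hkerΦ hrangeΦ⟩

/-- Every twisted sum of `c₀ = c₀(ℕ)` and a separable isomorphically
polyhedral Banach space is isomorphically polyhedral. Here `c₀(ℕ)` is realized as the space
of real functions on `ℕ` (a discrete space) vanishing at infinity, i.e. real sequences
converging to `0`, with the sup norm. -/
theorem twistedSum_c0_separable_isomorphicallyPolyhedral
    (X : Type) [NormedAddCommGroup X] [NormedSpace ℝ X] [CompleteSpace X]
    [TopologicalSpace.SeparableSpace X]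
    (hX : IsomorphicallyPolyhedral X)
    (Z : Type) [NormedAddCommGroup Z] [NormedSpace ℝ Z] [CompleteSpace Z]
    (hZ : IsTwistedSum (ZeroAtInftyContinuousMap ℕ ℝ) Z X) :
    IsomorphicallyPolyhedral Z := by
  obtain ⟨j, q, ⟨c, hc, hjb⟩, hqs, hker⟩ := hZ
  haveI hZsep : TopologicalSpace.SeparableSpace Z := Z_separable X Z j q hqs hker
  obtain ⟨e1⟩ := twisted_splitting X Z j q c hc hjb hqs hker
  obtain ⟨P, iP1, iP2, hPc, hPpoly, ⟨eX⟩⟩ := hX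
  letI := iP1; letI := iP2; haveI := hPc
  exact ⟨(ZeroAtInftyContinuousMap ℕ ℝ) × P, inferInstance, inferInstance, inferInstance,
    isPolyhedral_prod isPolyhedral_c0 hPpoly,
    ⟨e1.trans ((ContinuousLinearEquiv.refl ℝ (ZeroAtInftyContinuousMap ℕ ℝ)).prodCongr eX)⟩⟩
end
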